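/- arXiv:2012.08232 — 12 statements merged into one kernel-verified Lean document; each statement's English description precedes it below -/
import Mathlib

section
/- Let q be an odd prime power, α ∈ F_q, and R ⊆ F_q \ {α}. Suppose A ⊆ F_q^n satisfies ⟨a,a⟩ = α for every a ∈ A, and ⟨x,y⟩ ∈ R for all distinct x, y ∈ A. Then |A| ≤ 2·C(n+|R|, |R|). -/
/-!
For `a ∈ A` the function `f_a y = ∏_{r ∈ R} (⟨a, y⟩ - r)` vanishes at every other point
of `A` (their dot products with `a` lie in `R`) but not at `a` itself (as `⟨a, a⟩ = α ∉ R`),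
so the `f_a` are linearly independent. Each `f_a` is a product of `|R|` affine functions of
`y`, hence lies in the `|R|`-th power of the span of the coordinate functions and `1`; that
power is spanned by the monomials indexed by `Sym (Option (Fin n)) |R|`, of which there are
`C(n + |R|, |R|)`.
-/

open Finset Module Submodule

theorem linearIndependent_of_diagonal_eval {ι X K : Type*} [Field K] (f : ι → X → K)
    (p : ι → X) (hdiag : ∀ i, f i (p i) ≠ 0) (hoff : ∀ i j, i ≠ j → f i (p j) = 0) :
    LinearIndependent K f := by
  classical
  refine linearIndependent_iff'.2 fun s w hw i hi => ?_
  have hpi : ∑ j ∈ s, w j * f j (p i) = w i * f i (p i) :=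
    sum_eq_single_of_mem i hi fun j _ hji => by rw [hoff j i hji, mul_zero]
  have := congrFun hw (p i)
  simp only [Finset.sum_apply, Pi.smul_apply, smul_eq_mul, Pi.zero_apply, hpi] at this
  exact (mul_eq_zero.1 this).resolve_right (hdiag i)

section SymPow

variable {K A β : Type*} (v : β → A)

theorem span_range_pow_le_span_sym_prod [CommSemiring K] [CommSemiring A] [Algebra K A] (k : ℕ) :
    span K (Set.range v) ^ k ≤ span K (Set.range fun s : Sym β k => (s.1.map v).prod) := by
  induction k with
  | zero =>
    rw [pow_zero, one_eq_span]
    exact span_mono (Set.singleton_subset_iff.2 ⟨Sym.nil, by simp⟩)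
  | succ k ih =>
    rw [Submodule.pow_succ]
    refine (mul_le_mul' ih le_rfl).trans ?_
    rw [span_mul_span]
    refine span_mono ?_
    rintro _ ⟨_, ⟨s, rfl⟩, _, ⟨b, rfl⟩, rfl⟩
    refine ⟨b ::ₛ s, ?_⟩
    simp only [Sym.val_eq_coe, Sym.coe_cons, Multiset.map_cons, Multiset.prod_cons, mul_comm]

theorem finrank_span_range_pow_le [Field K] [CommRing A] [Algebra K A] [Fintype β] (k : ℕ) :
    finrank K ↥(span K (Set.range v) ^ k) ≤ (Fintype.card β + k - 1).choose k := by
  classical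
  rw [← Sym.card_sym_eq_choose]
  have := FiniteDimensional.span_of_finite K
    (Set.finite_range fun s : Sym β k => (s.1.map v).prod)
  exact (finrank_mono (span_range_pow_le_span_sym_prod v k)).trans (finrank_range_le_card _)

end SymPow

theorem Submodule.prod_mem_pow {K A ι : Type*} [CommSemiring K] [CommSemiring A] [Algebra K A]
    {M : Submodule K A} {s : Finset ι} {f : ι → A} (hf : ∀ i ∈ s, f i ∈ M) :
    ∏ i ∈ s, f i ∈ M ^ s.card := by
  classical
  induction s using Finset.induction_on with
  | empty => rw [prod_empty, card_empty, pow_zero]; exact one_le.1 le_rfl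
  | insert i s hi ih =>
    rw [prod_insert hi, card_insert_of_notMem hi, Submodule.pow_succ, mul_comm (f i)]
    exact mul_mem_mul (ih fun j hj => hf j (mem_insert_of_mem hj)) (hf i (mem_insert_self i s))

section Homogenized

variable {ι K : Type*} [Field K]

def homogenizedCoord (o : Option ι) (y : ι → K) : K := o.elim 1 y

theorem dotProduct_sub_mem_span_homogenizedCoord [Fintype ι] (a : ι → K) (r : K) :
    (fun y => a ⬝ᵥ y - r) ∈ span K (Set.range (homogenizedCoord (ι := ι) (K := K))) := by
  have h : (fun y => a ⬝ᵥ y - r) =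
      ∑ i, a i • homogenizedCoord (some i) + (-r) • homogenizedCoord none := by
    funext y
    simp [homogenizedCoord, dotProduct, sub_eq_add_neg]
  rw [h]
  exact add_mem (sum_mem fun i _ => smul_mem _ _ (subset_span ⟨_, rfl⟩))
    (smul_mem _ _ (subset_span ⟨_, rfl⟩))

end Homogenized

theorem few_dot_products_card_bound_general (n : ℕ) (F : Type*) [Field F] [Fintype F]
    (α : F) (R : Finset F) (hR : α ∉ R)
    (A : Finset (Fin n → F))
    (h1 : ∀ a ∈ A, ∑ i, a i * a i = α)
    (h2 : ∀ x ∈ A, ∀ y ∈ A, x ≠ y → ∑ i, x i * y i ∈ R) :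
    A.card ≤ 2 * Nat.choose (n + R.card) R.card := by
  set f : A → (Fin n → F) → F := fun a => ∏ r ∈ R, fun y => a.1 ⬝ᵥ y - r
  have f_apply (a b : A) : f a b = ∏ r ∈ R, (a.1 ⬝ᵥ b.1 - r) := Finset.prod_apply _ _ _
  have hli : LinearIndependent F f := by
    refine linearIndependent_of_diagonal_eval f Subtype.val (fun a => ?_) fun a b hab => ?_
    · rw [f_apply, prod_ne_zero_iff]
      intro r hr
      rw [show a.1 ⬝ᵥ a.1 = α from h1 a a.2, sub_ne_zero]
      exact ne_of_mem_of_not_mem hr hR |>.symm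
    · rw [f_apply]
      exact prod_eq_zero (h2 a a.2 b b.2 (Subtype.val_injective.ne hab)) (sub_self _)
  have hspan : span F (Set.range f) ≤ span F (Set.range homogenizedCoord) ^ R.card :=
    span_le.2 <| Set.range_subset_iff.2 fun a =>
      prod_mem_pow fun r _ => dotProduct_sub_mem_span_homogenizedCoord a.1 r
  calc A.card = finrank F (span F (Set.range f)) := by
        rw [finrank_span_eq_card hli, Fintype.card_coe]
    _ ≤ finrank F ↥(span F (Set.range homogenizedCoord) ^ R.card) := finrank_mono hspan
    _ ≤ (n + 1 + R.card - 1).choose R.card := by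
      simpa using finrank_span_range_pow_le (K := F) (homogenizedCoord (ι := Fin n)) R.card
    _ ≤ 2 * (n + R.card).choose R.card := by rw [Nat.add_right_comm, Nat.add_sub_cancel]; omega

/-- if every `a ∈ A` has `⟨a,a⟩ = α` and all dot products between
distinct elements lie in `R ⊆ F_q \ {α}`, then `|A| ≤ 2·C(n+|R|, |R|)`. -/
theorem few_dot_products_card_bound (q n : ℕ) (F : Type*) [Field F] [Fintype F]
    [DecidableEq F] (hq : Fintype.card F = q) (hodd : Odd q)
    (α : F) (R : Finset F) (hR : α ∉ R)
    (A : Finset (Fin n → F))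
    (h1 : ∀ a ∈ A, ∑ i, a i * a i = α)
    (h2 : ∀ x ∈ A, ∀ y ∈ A, x ≠ y → ∑ i, x i * y i ∈ R) :
    A.card ≤ 2 * Nat.choose (n + R.card) R.card :=
  few_dot_products_card_bound_general n F α R hR A h1 h2
end

section
/- Let q be an odd prime power. Suppose A ⊆ F_q^n contains no right angle (no distinct x, y, z ∈ A with ⟨x−z, y−z⟩ = 0), and suppose every element a of A satisfies ⟨a,a⟩ = α for a fixed α ∈ F_q. Fix u ∈ A and β ∈ F_q, and let A_β = {x ∈ A \ {u} : ⟨u,x⟩ = β}. Then for any two distinct x, y ∈ A_β, the dot product ⟨x,y⟩ lies in F_q \ {α, 2β−α}. -/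
/-! Expanding `⟨x - z, y - z⟩` with `⟨u, x⟩ = ⟨u, y⟩ = β` and all norms `α`: if `⟨x, y⟩ = α` then
`x, u` meet at a right angle at `y`, and if `⟨x, y⟩ = 2β - α` then `x, y` meet at a right angle
at `u`. -/

open Matrix

theorem sub_dotProduct_sub {ι R : Type*} [Fintype ι] [CommRing R] (x y z : ι → R) :
    (x - z) ⬝ᵥ (y - z) = x ⬝ᵥ y - z ⬝ᵥ x - z ⬝ᵥ y + z ⬝ᵥ z := by
  rw [sub_dotProduct, dotProduct_sub, dotProduct_sub, dotProduct_comm x z]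
  ring

theorem dot_product_avoids_two_values_general (n : ℕ) (F : Type*) [Field F]
    (A : Finset (Fin n → F)) (α : F)
    (hA : ∀ x ∈ A, ∀ y ∈ A, ∀ z ∈ A, x ≠ y → y ≠ z → x ≠ z →
      ∑ i, (x i - z i) * (y i - z i) ≠ 0)
    (hnorm : ∀ a ∈ A, ∑ i, a i * a i = α)
    (u : Fin n → F) (hu : u ∈ A) (β : F)
    (x y : Fin n → F) (hx : x ∈ A) (hy : y ∈ A)
    (hxu : x ≠ u) (hyu : y ≠ u)
    (hxβ : ∑ i, u i * x i = β) (hyβ : ∑ i, u i * y i = β)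
    (hxy : x ≠ y) :
    ∑ i, x i * y i ≠ α ∧ ∑ i, x i * y i ≠ 2 * β - α := by
  have hux : u ⬝ᵥ x = β := hxβ
  have huy : u ⬝ᵥ y = β := hyβ
  have huu : u ⬝ᵥ u = α := hnorm u hu
  have hyy : y ⬝ᵥ y = α := hnorm y hy
  change x ⬝ᵥ y ≠ α ∧ x ⬝ᵥ y ≠ 2 * β - α
  constructor
  · intro hxyα
    refine hA x hx u hu y hy hxu hyu.symm hxy ?_
    change (x - y) ⬝ᵥ (u - y) = 0
    rw [sub_dotProduct_sub, dotProduct_comm y x, dotProduct_comm x u, dotProduct_comm y u]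
    linear_combination hux - hxyα - huy + hyy
  · intro hxyβ
    refine hA x hx y hy u hu hxy hyu hxu ?_
    change (x - u) ⬝ᵥ (y - u) = 0
    rw [sub_dotProduct_sub]
    linear_combination hxyβ - hux - huy + huu

/-- in a right-angle-free set with constant self dot product `α`,
fixing `u ∈ A` and `β`, any two distinct `x, y ∈ A \ {u}` with
`⟨u,x⟩ = ⟨u,y⟩ = β` satisfy `⟨x,y⟩ ∉ {α, 2β - α}`. -/
theorem dot_product_avoids_two_values (q n : ℕ) (F : Type*) [Field F] [Fintype F]
    (hq : Fintype.card F = q) (hodd : Odd q)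
    (A : Finset (Fin n → F)) (α : F)
    (hA : ∀ x ∈ A, ∀ y ∈ A, ∀ z ∈ A, x ≠ y → y ≠ z → x ≠ z →
      ∑ i, (x i - z i) * (y i - z i) ≠ 0)
    (hnorm : ∀ a ∈ A, ∑ i, a i * a i = α)
    (u : Fin n → F) (hu : u ∈ A) (β : F)
    (x y : Fin n → F) (hx : x ∈ A) (hy : y ∈ A)
    (hxu : x ≠ u) (hyu : y ≠ u)
    (hxβ : ∑ i, u i * x i = β) (hyβ : ∑ i, u i * y i = β)
    (hxy : x ≠ y) :
    ∑ i, x i * y i ≠ α ∧ ∑ i, x i * y i ≠ 2 * β - α :=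
  dot_product_avoids_two_values_general n F A α hA hnorm u hu β x y hx hy hxu hyu hxβ hyβ hxy
end

section
/- Let q be an odd prime, k ≥ 2 an integer, and set t = ⌊kq/(2k−1)⌋. Let 𝒜 be a family of t-element subsets of [n] such that |F ∩ G| < ((k−1)/k)·t for all distinct F, G ∈ 𝒜, and let A ⊆ F_q^n be the set of characteristic vectors (with entries 0, 1 viewed in F_q) of members of 𝒜. Then A contains no k-right corner: there are no k+1 distinct vectors x_0, x_1, …, x_k ∈ A with ⟨x_i − x_0, x_j − x_0⟩ = 0 for all 1 ≤ i < j ≤ k. -/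
/-!
Write `S₀, …, S_k` for the sets of a corner and `t` for their size. Over `ℤ` the product
`⟨1_{S_i} - 1_{S₀}, 1_{S_j} - 1_{S₀}⟩` counts `(S_i ∩ S_j) \ S₀` and `S₀ \ (S_i ∪ S_j)`,
so it lies in `[0, |S_i ∩ S_j| + t]`. The intersection bound and `(2k - 1) t ≤ kq` make
that less than `q`, so vanishing mod `q` forces `S₀ ⊆ S_i ∪ S_j`. Then the sets `S₀ \ S_i`
are pairwise disjoint inside `S₀`, so on average `|S₀ ∩ S_i| ≥ (k - 1) t / k`, against
the intersection bound.
-/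

open Finset

section CharVec

variable {ι : Type*} [DecidableEq ι]

def charVec (R : Type*) [Zero R] [One R] (S : Finset ι) : ι → R :=
  fun i => if i ∈ S then 1 else 0

variable [Fintype ι]

theorem sum_charVec {R : Type*} [AddCommMonoidWithOne R] (S : Finset ι) :
    ∑ m, charVec R S m = #S := by
  simp [charVec, sum_ite_mem]

theorem sum_charVec_sub_mul_charVec_sub {R : Type*} [CommRing R] (S T U : Finset ι) :
    ∑ m, (charVec R S m - charVec R U m) * (charVec R T m - charVec R U m) =
      (#((S ∩ T) \ U) + #(U \ (S ∪ T)) : ℕ) := by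
  have hterm : ∀ m, (charVec R S m - charVec R U m) * (charVec R T m - charVec R U m) =
      charVec R ((S ∩ T) \ U) m + charVec R (U \ (S ∪ T)) m := by
    intro m
    simp only [charVec, mem_sdiff, mem_inter, mem_union]
    split_ifs <;> simp_all
  simp only [hterm, sum_add_distrib, sum_charVec, Nat.cast_add]

theorem subset_union_of_sum_charVec_sub_mul_charVec_sub_eq_zero {q : ℕ} {S T U : Finset ι}
    (h : ∑ m, (charVec (ZMod q) S m - charVec (ZMod q) U m) *
      (charVec (ZMod q) T m - charVec (ZMod q) U m) = 0)
    (hlt : #(S ∩ T) + #U < q) : U ⊆ S ∪ T := by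
  rw [sum_charVec_sub_mul_charVec_sub, ZMod.natCast_eq_zero_iff] at h
  have hle : #((S ∩ T) \ U) + #(U \ (S ∪ T)) ≤ #(S ∩ T) + #U :=
    add_le_add (card_le_card sdiff_subset) (card_le_card sdiff_subset)
  have hzero := Nat.eq_zero_of_dvd_of_lt h (hle.trans_lt hlt)
  rw [← sdiff_eq_empty_iff_subset, ← card_eq_zero]
  omega

end CharVec

section Counting

variable {ι α : Type*} [DecidableEq α]

theorem card_mul_card_le_sum_card_inter_add_card {I : Finset ι} {S : ι → Finset α}
    {U : Finset α} (hcover : (I : Set ι).Pairwise fun i j => U ⊆ S i ∪ S j) :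
    #I * #U ≤ ∑ i ∈ I, #(U ∩ S i) + #U := by
  have hdisj : (I : Set ι).PairwiseDisjoint fun i => U \ S i := by
    intro i hi j hj hij
    simp only [Function.onFun, disjoint_left, mem_sdiff]
    intro m hmi hmj
    rcases mem_union.mp (hcover hi hj hij hmi.1) with h | h
    exacts [hmi.2 h, hmj.2 h]
  have hdiff : ∑ i ∈ I, #(U \ S i) ≤ #U := by
    rw [← card_biUnion hdisj]
    exact card_le_card (biUnion_subset.mpr fun _ _ => sdiff_subset)
  calc #I * #U = ∑ i ∈ I, (#(U ∩ S i) + #(U \ S i)) := by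
        simp [card_inter_add_card_sdiff]
    _ ≤ ∑ i ∈ I, #(U ∩ S i) + #U := by
        rw [sum_add_distrib]; exact Nat.add_le_add_left hdiff _

theorem exists_sub_one_mul_card_le_card_mul_card_inter {I : Finset ι} {S : ι → Finset α}
    {U : Finset α} (hI : I.Nonempty) (hcover : (I : Set ι).Pairwise fun i j => U ⊆ S i ∪ S j) :
    ∃ i ∈ I, (#I - 1) * #U ≤ #I * #(U ∩ S i) := by
  by_contra! hlt
  have hsum := sum_lt_sum_of_nonempty hI hlt
  rw [sum_const, smul_eq_mul, ← mul_sum] at hsum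
  have hcount := card_mul_card_le_sum_card_inter_add_card hcover
  have : 1 ≤ #I := hI.card_pos
  set k := #I
  obtain ⟨j, hj⟩ : ∃ j, k = j + 1 := ⟨k - 1, by omega⟩
  rw [hj, Nat.add_sub_cancel] at hsum
  rw [hj] at hcount
  nlinarith

end Counting

theorem add_div_lt_of_mul_lt_sub_one_mul_div {k q a : ℕ} (hk : 1 ≤ k)
    (h : k * a < (k - 1) * (k * q / (2 * k - 1))) : a + k * q / (2 * k - 1) < q := by
  set t := k * q / (2 * k - 1)
  have ht : t * (2 * k - 1) ≤ k * q := Nat.div_mul_le_self _ _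
  obtain ⟨j, rfl⟩ : ∃ j, k = j + 1 := ⟨k - 1, by omega⟩
  simp only [Nat.add_sub_cancel] at h
  have : 2 * (j + 1) - 1 = 2 * j + 1 := by omega
  rw [this] at ht
  nlinarith

theorem char_vectors_no_k_right_corner_general (q k n : ℕ)
    (hk : 2 ≤ k)
    (𝒜 : Finset (Finset (Fin n)))
    (ht : ∀ S ∈ 𝒜, S.card = (k * q) / (2 * k - 1))
    (hint : ∀ S ∈ 𝒜, ∀ T ∈ 𝒜, S ≠ T →
      k * (S ∩ T).card < (k - 1) * ((k * q) / (2 * k - 1)))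
    (A : Finset (Fin n → ZMod q))
    (hA : A = 𝒜.image (fun S i => if i ∈ S then (1 : ZMod q) else 0)) :
    ¬ ∃ x : Fin (k + 1) → Fin n → ZMod q,
      (∀ i, x i ∈ A) ∧ Function.Injective x ∧
      ∀ i j : Fin (k + 1), 0 < i → i < j →
        ∑ m, (x i m - x 0 m) * (x j m - x 0 m) = 0 := by
  rintro ⟨x, hxA, hx_inj, hcorner⟩
  have hxA : ∀ i, x i ∈ 𝒜.image (charVec (ZMod q)) := hA ▸ hxA
  choose S hS hSx using fun i => mem_image.mp (hxA i)
  have hS_inj : Function.Injective S := fun i j h => hx_inj (by rw [← hSx i, ← hSx j, h])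
  have hinter : ∀ i j, i ≠ j → k * #(S i ∩ S j) < (k - 1) * (k * q / (2 * k - 1)) :=
    fun i j hij => hint _ (hS i) _ (hS j) (hS_inj.ne hij)
  have hcover : ((univ.erase 0 : Finset (Fin (k + 1))) : Set _).Pairwise
      fun i j => S 0 ⊆ S i ∪ S j := by
    intro i hi j hj hij
    have hlt : #(S i ∩ S j) + #(S 0) < q := by
      rw [ht _ (hS 0)]; exact add_div_lt_of_mul_lt_sub_one_mul_div (by omega) (hinter i j hij)
    rcases hij.lt_or_gt with h | h
    · refine subset_union_of_sum_charVec_sub_mul_charVec_sub_eq_zero ?_ hlt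
      simpa only [← hSx] using hcorner i j (Fin.pos_of_ne_zero (ne_of_mem_erase hi)) h
    · rw [union_comm]
      refine subset_union_of_sum_charVec_sub_mul_charVec_sub_eq_zero ?_ (by rwa [inter_comm])
      simpa only [← hSx] using hcorner j i (Fin.pos_of_ne_zero (ne_of_mem_erase hj)) h
  obtain ⟨i, hi, hle⟩ :=
    exists_sub_one_mul_card_le_card_mul_card_inter ⟨1, by simp; omega⟩ hcover
  have hcard : #(univ.erase (0 : Fin (k + 1))) = k := by simp
  rw [hcard, ht _ (hS 0), inter_comm] at hle
  exact hle.not_gt (hinter i 0 (ne_of_mem_erase hi))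

/-- the set of characteristic vectors of a `t`-uniform family
(with `t = ⌊kq/(2k-1)⌋`) whose pairwise intersections have size `< ((k-1)/k)·t`
contains no `k`-right corner. -/
theorem char_vectors_no_k_right_corner (q k n : ℕ) (hq : q.Prime) (hodd : Odd q)
    (hk : 2 ≤ k)
    (𝒜 : Finset (Finset (Fin n)))
    (ht : ∀ S ∈ 𝒜, S.card = (k * q) / (2 * k - 1))
    (hint : ∀ S ∈ 𝒜, ∀ T ∈ 𝒜, S ≠ T →
      k * (S ∩ T).card < (k - 1) * ((k * q) / (2 * k - 1)))
    (A : Finset (Fin n → ZMod q))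
    (hA : A = 𝒜.image (fun S i => if i ∈ S then (1 : ZMod q) else 0)) :
    ¬ ∃ x : Fin (k + 1) → Fin n → ZMod q,
      (∀ i, x i ∈ A) ∧ Function.Injective x ∧
      ∀ i j : Fin (k + 1), 0 < i → i < j →
        ∑ m, (x i m - x 0 m) * (x j m - x 0 m) = 0 :=
  char_vectors_no_k_right_corner_general q k n hk 𝒜 ht hint A hA
end

section
/- Let q be an odd prime and let A ⊆ F_q^n be a set such that ⟨x−y, x−y⟩ ≠ 0 for all distinct x, y ∈ A. Then |A| ≤ C(n+q, q−1) − C(n+q−2, q−3). -/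
/-!
Lift `x ∈ 𝔽_q^n` to the point `(x, ⟨x, x⟩)` of the paraboloid `t = ⟨x, x⟩` in `𝔽_q^{n+1}`.
There `⟨x - a, x - a⟩` is an affine function of `(x, t)`, so `1 - ⟨x - a, x - a⟩^(q-1)` is the
restriction of a polynomial of degree `q - 1` in `n + 1` variables, and by Fermat it is the
indicator of `a` on `A`. These restrictions are linearly independent, while the restriction map
from polynomials of degree `≤ q - 1` kills the `C(n+q-2, q-3)`-dimensional space of multiples
`(t - ⟨x, x⟩) · g` with `deg g ≤ q - 3`; the space of polynomials of degree `≤ q - 1` has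
dimension `C(n+q, q-1)`.
-/

open MvPolynomial Module

theorem card_add_finrank_le_finrank_of_le_ker {K M W ι : Type*} [Field K] [AddCommGroup M]
    [Module K M] [AddCommGroup W] [Module K W] [Fintype ι] {V N : Submodule K M}
    [FiniteDimensional K V] (f : M →ₗ[K] W) {v : ι → M} (hv : LinearIndependent K (f ∘ v))
    (hvV : ∀ i, v i ∈ V) (hNV : N ≤ V) (hNf : N ≤ LinearMap.ker f) :
    Fintype.card ι + finrank K N ≤ finrank K V := by
  have hSV : Submodule.span K (Set.range v) ≤ V :=
    Submodule.span_le.2 (Set.range_subset_iff.2 hvV)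
  have : FiniteDimensional K N := Submodule.finiteDimensional_of_le hNV
  have : FiniteDimensional K (Submodule.span K (Set.range v)) :=
    Submodule.finiteDimensional_of_le hSV
  have hdisj : Disjoint (Submodule.span K (Set.range v)) N :=
    (Submodule.range_ker_disjoint hv).mono_right hNf
  rw [← finrank_span_eq_card (hv.of_comp f), ← Submodule.finrank_sup_add_finrank_inf_eq,
    hdisj.eq_bot, finrank_bot, add_zero]
  exact Submodule.finrank_mono (sup_le hSV hNV)

def sumLeEquivOptionSumEq (α : Type*) [Fintype α] (d : ℕ) :
    {f : α → ℕ // ∑ i, f i ≤ d} ≃ {g : Option α → ℕ // ∑ o, g o = d} where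
  toFun f := ⟨fun o => o.elim (d - ∑ i, f.1 i) f.1, by
    have := f.2
    simp only [Fintype.sum_option, Option.elim]
    omega⟩
  invFun g := ⟨fun i => g.1 (some i), by
    show ∑ i, g.1 (some i) ≤ d
    have := g.2
    rw [Fintype.sum_option] at this
    omega⟩
  left_inv f := rfl
  right_inv g := by
    have := g.2
    rw [Fintype.sum_option] at this
    ext (_ | i)
    · simp only [Option.elim]
      omega
    · rfl

theorem finrank_restrictTotalDegree (σ K : Type*) [Fintype σ] [Field K] (d : ℕ) :
    finrank K (restrictTotalDegree σ K d) = (Fintype.card σ + d).choose d := by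
  classical
  rw [restrictTotalDegree, finrank_eq_nat_card_basis (basisRestrictSupport K _)]
  have e : {s : σ →₀ ℕ | (s.sum fun _ e => e) ≤ d} ≃ Sym (Option σ) d :=
    (Finsupp.equivFunOnFinite.subtypeEquiv fun s => by simp [Finsupp.sum_fintype]).trans
      ((sumLeEquivOptionSumEq σ d).trans (Sym.equivNatSumOfFintype (Option σ) d).symm)
  rw [Nat.card_congr e, Nat.card_eq_fintype_card, Sym.card_sym_eq_choose, Fintype.card_option]
  congr 1
  omega

theorem card_add_choose_le_choose_of_eval {K σ ι : Type*} [Field K] [Fintype σ] [Fintype ι]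
    {y : ι → σ → K} {P : ι → MvPolynomial σ K} {h : MvPolynomial σ K} {d e : ℕ}
    (hP : ∀ i, (P i).totalDegree ≤ d) (hdiag : ∀ i, eval (y i) (P i) ≠ 0)
    (hoff : ∀ i j, i ≠ j → eval (y j) (P i) = 0)
    (h0 : h ≠ 0) (hde : h.totalDegree + e ≤ d) (hvanish : ∀ i, eval (y i) h = 0) :
    Fintype.card ι + (Fintype.card σ + e).choose e ≤
      (Fintype.card σ + d).choose d := by
  classical
  let f : MvPolynomial σ K →ₗ[K] ι → K := LinearMap.pi fun j => (aeval (y j)).toLinearMap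
  let N := (restrictTotalDegree σ K e).map (LinearMap.mulLeft K h)
  have hf : f ∘ P = fun i => Pi.single i (eval (y i) (P i)) := by
    ext i j
    rcases eq_or_ne j i with rfl | hji
    · simp [f]
    · simp [f, hji, hoff i j hji.symm]
  have hNV : N ≤ restrictTotalDegree σ K d := by
    rintro _ ⟨p, hp, rfl⟩
    rw [SetLike.mem_coe, mem_restrictTotalDegree] at hp
    rw [LinearMap.mulLeft_apply, mem_restrictTotalDegree]
    have := totalDegree_mul h p
    omega
  have hNf : N ≤ LinearMap.ker f := by
    rintro _ ⟨p, -, rfl⟩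
    ext j
    simp [f, hvanish]
  have hN : finrank K N = finrank K (restrictTotalDegree σ K e) :=
    (Submodule.equivMapOfInjective _ (mul_right_injective₀ h0) _).finrank_eq.symm
  have := card_add_finrank_le_finrank_of_le_ker f
    (hf ▸ Pi.linearIndependent_single_of_ne_zero hdiag)
    (fun i => (mem_restrictTotalDegree _ _ _).2 (hP i)) hNV hNf
  rwa [hN, finrank_restrictTotalDegree, finrank_restrictTotalDegree] at this

section Paraboloid

variable {R ι : Type*} [CommRing R] [Fintype ι]

def paraboloidLift (x : ι → R) : Option ι → R :=
  fun o => o.elim (∑ i, x i * x i) x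

noncomputable def paraboloidEq : MvPolynomial (Option ι) R :=
  X none - ∑ i, X (some i) ^ 2

theorem eval_paraboloidLift_paraboloidEq (x : ι → R) :
    eval (paraboloidLift x) (paraboloidEq : MvPolynomial (Option ι) R) = 0 := by
  simp [paraboloidEq, paraboloidLift, sq]

theorem paraboloidEq_ne_zero [Nontrivial R] :
    (paraboloidEq : MvPolynomial (Option ι) R) ≠ 0 := by
  intro h
  simpa [paraboloidEq] using congrArg (eval fun o => o.elim (1 : R) 0) h

theorem totalDegree_paraboloidEq_le [Nontrivial R] :
    (paraboloidEq : MvPolynomial (Option ι) R).totalDegree ≤ 2 := by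
  refine (totalDegree_sub _ _).trans (max_le ((totalDegree_X _).trans_le one_le_two) ?_)
  refine (totalDegree_finsetSum _ _).trans (Finset.sup_le fun i _ => ?_)
  exact (totalDegree_X_pow _ _).le

/-- On the paraboloid `t = ⟨x, x⟩` this affine form takes the value `⟨x - a, x - a⟩`. -/
noncomputable def sqDistForm (a : ι → R) : MvPolynomial (Option ι) R :=
  X none - ∑ i, C (2 * a i) * X (some i) + C (∑ i, a i * a i)

theorem eval_paraboloidLift_sqDistForm (x a : ι → R) :
    eval (paraboloidLift x) (sqDistForm a) = ∑ i, (x i - a i) * (x i - a i) := by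
  simp only [sqDistForm, paraboloidLift, map_add, map_sub, map_sum, map_mul, eval_X, eval_C,
    Option.elim]
  rw [← Finset.sum_sub_distrib, ← Finset.sum_add_distrib]
  exact Finset.sum_congr rfl fun i _ => by ring

theorem totalDegree_sqDistForm_le [Nontrivial R] (a : ι → R) :
    (sqDistForm a).totalDegree ≤ 1 := by
  refine (totalDegree_add _ _).trans (max_le ?_ ((totalDegree_C _).trans_le zero_le_one))
  refine (totalDegree_sub _ _).trans (max_le (totalDegree_X _).le ?_)
  refine (totalDegree_finsetSum _ _).trans (Finset.sup_le fun i _ => ?_)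
  exact (totalDegree_mul _ _).trans (by rw [totalDegree_C, totalDegree_X, zero_add])

end Paraboloid

/-- if no difference of distinct elements of `A ⊆ F_q^n` is
self-orthogonal, then `|A| ≤ C(n+q, q-1) - C(n+q-2, q-3)`. -/
theorem no_self_orthogonal_difference_upper_bound (q n : ℕ) (hq : q.Prime)
    (hodd : Odd q)
    (A : Finset (Fin n → ZMod q))
    (hA : ∀ x ∈ A, ∀ y ∈ A, x ≠ y → ∑ i, (x i - y i) * (x i - y i) ≠ 0) :
    A.card ≤ Nat.choose (n + q) (q - 1) - Nat.choose (n + q - 2) (q - 3) := by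
  have := Fact.mk hq
  have hq3 : 3 ≤ q := by
    obtain ⟨k, rfl⟩ := hodd
    have := hq.two_le
    omega
  have hP (a : A) : (1 - sqDistForm a.1 ^ (q - 1)).totalDegree ≤ q - 1 :=
    (totalDegree_sub _ _).trans <| max_le (totalDegree_one.trans_le (Nat.zero_le _)) <|
      (totalDegree_pow _ _).trans <|
        (Nat.mul_le_mul_left _ (totalDegree_sqDistForm_le a.1)).trans (Nat.mul_one _).le
  have hdiag (a : A) : eval (paraboloidLift a.1) (1 - sqDistForm a.1 ^ (q - 1)) ≠ 0 := by
    simp [eval_paraboloidLift_sqDistForm, zero_pow (show q - 1 ≠ 0 by omega)]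
  have hoff (a b : A) (hab : a ≠ b) :
      eval (paraboloidLift b.1) (1 - sqDistForm a.1 ^ (q - 1)) = 0 := by
    rw [map_sub, map_one, map_pow, eval_paraboloidLift_sqDistForm,
      ZMod.pow_card_sub_one_eq_one (hA b.1 b.2 a.1 a.2 (Subtype.coe_ne_coe.2 hab.symm)), sub_self]
  have key := card_add_choose_le_choose_of_eval (e := q - 3) hP hdiag hoff paraboloidEq_ne_zero
    (by have := totalDegree_paraboloidEq_le (R := ZMod q) (ι := Fin n); omega)
    (fun a => eval_paraboloidLift_paraboloidEq a.1)
  rw [Fintype.card_coe, Fintype.card_option, Fintype.card_fin,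
    show n + 1 + (q - 3) = n + q - 2 by omega, show n + 1 + (q - 1) = n + q by omega] at key
  omega
end

section
/- Let q be an odd prime and n ≥ q−1. Let A ⊆ F_q^n be the set of all 0-1 vectors with exactly q−1 entries equal to 1. Then for all distinct x, y ∈ A we have ⟨x−y, x−y⟩ ≠ 0 in F_q; in particular S(n,q) ≥ C(n, q−1), where S(n,q) is the maximum size of a subset of F_q^n with no self-orthogonal difference between distinct elements. -/
/-!
If `x` and `y` are the indicator vectors of sets `S` and `T`, then `⟨x - y, x - y⟩` counts the
coordinates in `S ∆ T`, and for `#S = #T = q - 1` this count is `2 * #(S \ T)` with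
`0 < #(S \ T) < q`. Since `q` is an odd prime, it is nonzero in `ZMod q`.
-/

open Finset
open scoped symmDiff

variable {ι R : Type*} [DecidableEq ι]

def indicatorVec [Zero R] [One R] (S : Finset ι) : ι → R := fun i => if i ∈ S then 1 else 0

theorem indicatorVec_injective [Zero R] [One R] [NeZero (1 : R)] :
    Function.Injective (indicatorVec : Finset ι → ι → R) := by
  intro S T h
  ext i
  have := congrFun h i
  by_cases hS : i ∈ S <;> by_cases hT : i ∈ T <;> simp_all [indicatorVec]

def indicatorVecEmbedding (R : Type*) [Zero R] [One R] [NeZero (1 : R)] : Finset ι ↪ (ι → R) :=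
  ⟨indicatorVec, indicatorVec_injective⟩

theorem filter_zero_one_vectors_eq_map_powersetCard [Fintype ι] [Fintype R] [DecidableEq R]
    [Zero R] [One R] [NeZero (1 : R)] (k : ℕ)
    [DecidablePred fun x : ι → R => (∀ i, x i = 0 ∨ x i = 1) ∧ #(univ.filter (x · = 1)) = k] :
    univ.filter (fun x : ι → R => (∀ i, x i = 0 ∨ x i = 1) ∧ #(univ.filter (x · = 1)) = k) =
      (powersetCard k univ).map (indicatorVecEmbedding R) := by
  ext x
  simp only [mem_filter, mem_univ, true_and, mem_map, mem_powersetCard, subset_univ,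
    indicatorVecEmbedding, Function.Embedding.coeFn_mk]
  constructor
  · rintro ⟨hx01, hxk⟩
    refine ⟨univ.filter (x · = 1), hxk, funext fun i => ?_⟩
    rcases hx01 i with h | h <;> simp [indicatorVec, h]
  · rintro ⟨S, hSk, rfl⟩
    refine ⟨fun i => ?_, ?_⟩
    · by_cases h : i ∈ S <;> simp [indicatorVec, h]
    · convert hSk
      ext i
      by_cases h : i ∈ S <;> simp [indicatorVec, h]

theorem sum_sub_indicatorVec_mul_self [Fintype ι] [Ring R] (S T : Finset ι) :
    ∑ i, (indicatorVec S i - indicatorVec T i) * (indicatorVec S i - indicatorVec T i) =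
      (#(S ∆ T) : R) := by
  rw [← univ_inter (S ∆ T), ← filter_mem_eq_inter, ← sum_boole]
  refine sum_congr rfl fun i _ => ?_
  by_cases hS : i ∈ S <;> by_cases hT : i ∈ T <;> simp [indicatorVec, mem_symmDiff, hS, hT]

theorem Finset.card_symmDiff_of_card_eq {α : Type*} [DecidableEq α] {S T : Finset α}
    (h : #S = #T) : #(S ∆ T) = 2 * #(S \ T) := by
  rw [Finset.symmDiff_def, card_union_of_disjoint disjoint_sdiff_sdiff, card_sdiff_comm h, two_mul]

theorem ZMod.natCast_two_mul_ne_zero {p k : ℕ} (hp : p.Prime) (hodd : Odd p) (hk0 : 0 < k)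
    (hkp : k < p) : ((2 * k : ℕ) : ZMod p) ≠ 0 := by
  rw [Ne, ZMod.natCast_eq_zero_iff]
  intro h
  rcases hp.dvd_mul.mp h with h2 | hk
  · obtain rfl := (Nat.prime_dvd_prime_iff_eq hp Nat.prime_two).mp h2
    exact Nat.not_odd_iff_even.mpr even_two hodd
  · exact (Nat.le_of_dvd hk0 hk).not_gt hkp

theorem zero_one_vectors_no_self_orthogonal_general (q n : ℕ) [NeZero q] (hq : q.Prime)
    (hodd : Odd q)
    (A : Finset (Fin n → ZMod q))
    (hA : A = Finset.univ.filter (fun x : Fin n → ZMod q =>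
      (∀ i, x i = 0 ∨ x i = 1) ∧
      (Finset.univ.filter (fun i => x i = 1)).card = q - 1)) :
    (∀ x ∈ A, ∀ y ∈ A, x ≠ y → ∑ i, (x i - y i) * (x i - y i) ≠ 0) ∧
    A.card = Nat.choose n (q - 1) := by
  have : Fact (1 < q) := ⟨hq.one_lt⟩
  obtain rfl : A = (powersetCard (q - 1) univ).map (indicatorVecEmbedding (ZMod q)) :=
    hA.trans (filter_zero_one_vectors_eq_map_powersetCard (q - 1))
  refine ⟨?_, by rw [card_map, card_powersetCard, card_univ, Fintype.card_fin]⟩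
  simp only [mem_map, mem_powersetCard, indicatorVecEmbedding, Function.Embedding.coeFn_mk]
  rintro _ ⟨S, ⟨-, hS⟩, rfl⟩ _ ⟨T, ⟨-, hT⟩, rfl⟩ hne
  have hST : S ≠ T := ne_of_apply_ne _ hne
  have hpos : 0 < #(S \ T) := card_pos.mpr <| sdiff_nonempty.mpr fun hsub =>
    hST (eq_of_subset_of_card_le hsub (hT.trans hS.symm).le)
  have hlt : #(S \ T) < q := (card_le_card sdiff_subset).trans_lt (hS ▸ Nat.sub_lt hq.pos one_pos)
  rw [sum_sub_indicatorVec_mul_self, card_symmDiff_of_card_eq (hS.trans hT.symm)]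
  exact ZMod.natCast_two_mul_ne_zero hq hodd hpos hlt

/-- the set of 0-1 vectors with exactly `q-1` entries equal to 1
has no self-orthogonal difference, and has size `C(n, q-1)`. -/
theorem zero_one_vectors_no_self_orthogonal (q n : ℕ) [NeZero q] (hq : q.Prime)
    (hodd : Odd q) (hn : q - 1 ≤ n)
    (A : Finset (Fin n → ZMod q))
    (hA : A = Finset.univ.filter (fun x : Fin n → ZMod q =>
      (∀ i, x i = 0 ∨ x i = 1) ∧
      (Finset.univ.filter (fun i => x i = 1)).card = q - 1)) :
    (∀ x ∈ A, ∀ y ∈ A, x ≠ y → ∑ i, (x i - y i) * (x i - y i) ≠ 0) ∧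
    A.card = Nat.choose n (q - 1) :=
  zero_one_vectors_no_self_orthogonal_general q n hq hodd A hA
end

section
/- Let q be an odd prime with n ≢ −2 (mod q), or with q ≡ 1 (mod 4). Then there exist distinct a, b ∈ F_q satisfying (n+2)·b² = 2a² − 2a + 1 in F_q. -/
/-!
Write `m = n + 2`. For `m ≠ 0` the quadratics `m b²` and `2a² - 2a + 1` take `(q + 1) / 2` values
each, so their value sets meet and the equation has a solution; if it has `a = b`, then `a ≠ 0` and
`(a, -a)` is a solution with `a ≠ -a`. For `m = 0` the equation reads `(2a - 1)² = -1`, which is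
solvable when `-1` is a square, i.e. when `q ≡ 1 (mod 4)`; then any `b ≠ a` will do.
-/

open Polynomial

section

variable {F : Type*} [Field F]

theorem FiniteField.two_ne_zero_of_card_odd [Fintype F] (hF : Fintype.card F % 2 = 1) :
    (2 : F) ≠ 0 :=
  Ring.two_ne_zero fun hc => by rw [FiniteField.even_card_iff_char_two] at hc; omega

theorem FiniteField.exists_mul_sq_eq_two_mul_sq_sub_two_mul_add_one [Fintype F]
    (hF : Fintype.card F % 2 = 1) {m : F} (hm : m ≠ 0) :
    ∃ a b : F, m * b ^ 2 = 2 * a ^ 2 - 2 * a + 1 := by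
  obtain ⟨b, a, h⟩ := FiniteField.exists_root_sum_quadratic
    (f := C m * X ^ 2) (g := C (-2) * X ^ 2 + C 2 * X + C (-1))
    (by compute_degree!) (by compute_degree!; exact two_ne_zero_of_card_odd hF) hF
  simp only [eval_add, eval_mul, eval_pow, eval_C, eval_X] at h
  exact ⟨a, b, by linear_combination h⟩

theorem exists_ne_of_mul_sq_eq_two_mul_sq_sub_two_mul_add_one (h2 : (2 : F) ≠ 0) {m a b : F}
    (h : m * b ^ 2 = 2 * a ^ 2 - 2 * a + 1) :
    ∃ a b : F, a ≠ b ∧ m * b ^ 2 = 2 * a ^ 2 - 2 * a + 1 := by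
  by_cases hab : a = b
  · subst hab
    have ha : a ≠ 0 := by
      rintro rfl
      exact one_ne_zero (by linear_combination -h)
    refine ⟨a, -a, fun ha' => ?_, by rwa [neg_sq]⟩
    exact mul_ne_zero h2 ha (by linear_combination ha')
  · exact ⟨a, b, hab, h⟩

theorem two_mul_sq_sub_two_mul_add_one_eq_zero_of_sq_eq_neg_one (h2 : (2 : F) ≠ 0) {x : F}
    (hx : x ^ 2 = -1) :
    2 * ((x + 1) / 2) ^ 2 - 2 * ((x + 1) / 2) + 1 = 0 := by
  field_simp
  linear_combination hx

theorem FiniteField.exists_ne_mul_sq_eq_two_mul_sq_sub_two_mul_add_one [Fintype F]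
    (hF : Fintype.card F % 2 = 1) {m : F} (h : m ≠ 0 ∨ IsSquare (-1 : F)) :
    ∃ a b : F, a ≠ b ∧ m * b ^ 2 = 2 * a ^ 2 - 2 * a + 1 := by
  have h2 : (2 : F) ≠ 0 := two_ne_zero_of_card_odd hF
  by_cases hm : m = 0
  · obtain ⟨x, hx⟩ := h.resolve_left (not_not.mpr hm)
    refine ⟨(x + 1) / 2, (x + 1) / 2 + 1, by simp, ?_⟩
    rw [hm, zero_mul,
      two_mul_sq_sub_two_mul_add_one_eq_zero_of_sq_eq_neg_one h2 (by rw [sq, hx])]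
  · obtain ⟨a, b, hab⟩ := exists_mul_sq_eq_two_mul_sq_sub_two_mul_add_one hF hm
    exact exists_ne_of_mul_sq_eq_two_mul_sq_sub_two_mul_add_one h2 hab

end

/-- if `n ≢ -2 (mod q)` or `q ≡ 1 (mod 4)`, then the equation
`(n+2)b² = 2a² - 2a + 1` has a solution with `a ≠ b` in `F_q`. -/
theorem solvable_ab_equation (q n : ℕ) (hq : q.Prime) (hodd : Odd q)
    (h : (n : ZMod q) ≠ -2 ∨ q % 4 = 1) :
    ∃ a b : ZMod q, a ≠ b ∧
      ((n : ZMod q) + 2) * b ^ 2 = 2 * a ^ 2 - 2 * a + 1 := by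
  have : Fact q.Prime := ⟨hq⟩
  refine FiniteField.exists_ne_mul_sq_eq_two_mul_sq_sub_two_mul_add_one
    (by rw [ZMod.card]; exact Nat.odd_iff.mp hodd) ?_
  rcases h with hn | h4
  · exact .inl fun h0 => hn (eq_neg_of_add_eq_zero_left h0)
  · exact .inr (ZMod.exists_sq_eq_neg_one_iff.mpr (by omega))
end

section
/- Let q be an odd prime, and suppose n ≢ −2 (mod q) or q ≡ 1 (mod 4). Then there exists a set A ⊆ F_q^n with |A| = C(n, q−1) + C(n, q−2) such that ⟨x−y, x−y⟩ ≠ 0 for all distinct x, y ∈ A. -/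
/-!
Both families consist of two-valued vectors `twoValuedVec a b s` (value `a` on `s`, `b` off
it): `A₁` takes `(a, b) = (1, 0)` on `(q-1)`-sets and `A₂` a fixed pair `a ≠ b` on `(q-2)`-sets.
The squared length of the difference of two such vectors depends only on `#s`, `#t` and `#(s ∩ t)`.
Within one level `k < q` it is `2 (a - b)² (k - #(s ∩ t))`, and `0 < k - #(s ∩ t) < q`. Between
the levels, the relation `(n + 2) b² = 2a² - 2a + 1` reduces it to `-2 (a - b) (#(s ∩ t) + 1)`.
Writing `u = 2a - 1`, the relation reads `u² + 1 = 2 (n + 2) b²`: for `n + 2 ≠ 0` this is a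
nondegenerate conic, which has points over every finite field of odd order, and for `n + 2 = 0`
it asks for a square root of `-1`, which exists when `q ≡ 1 (mod 4)`.
-/

open Finset Polynomial

theorem Finset.card_inter_lt_of_card_eq {α : Type*} [DecidableEq α] {s t : Finset α}
    (hst : s ≠ t) (hcard : #s = #t) : #(s ∩ t) < #s := by
  refine card_lt_card (inter_subset_left.ssubset_of_ne fun h => hst ?_)
  exact eq_of_subset_of_card_le (inter_eq_left.mp h) hcard.ge

theorem CharP.natCast_ne_zero_of_pos_of_lt (R : Type*) [AddMonoidWithOne R] {p : ℕ} [CharP R p]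
    {m : ℕ} (h0 : 0 < m) (hm : m < p) : (m : R) ≠ 0 := by
  rw [Ne, CharP.cast_eq_zero_iff R p]
  exact Nat.not_dvd_of_pos_of_lt h0 hm

theorem CharP.two_ne_zero_of_two_lt (R : Type*) [AddMonoidWithOne R] {p : ℕ} [CharP R p]
    (hp : 2 < p) : (2 : R) ≠ 0 := by
  exact_mod_cast natCast_ne_zero_of_pos_of_lt R two_pos hp

section Nonisotropic

variable {ι R : Type*} [Fintype ι] [CommRing R]

def HasNonisotropicDifferences (A : Finset (ι → R)) : Prop :=
  ∀ x ∈ A, ∀ y ∈ A, x ≠ y → ∑ i, (x i - y i) * (x i - y i) ≠ 0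

theorem disjoint_of_sum_sub_mul_self_ne_zero {A B : Finset (ι → R)}
    (hAB : ∀ x ∈ A, ∀ y ∈ B, ∑ i, (x i - y i) * (x i - y i) ≠ 0) : Disjoint A B :=
  disjoint_left.mpr fun x hxA hxB => hAB x hxA x hxB (by simp)

theorem HasNonisotropicDifferences.union [DecidableEq R] {A B : Finset (ι → R)}
    (hA : HasNonisotropicDifferences A) (hB : HasNonisotropicDifferences B)
    (hAB : ∀ x ∈ A, ∀ y ∈ B, ∑ i, (x i - y i) * (x i - y i) ≠ 0) :
    HasNonisotropicDifferences (A ∪ B) := by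
  intro x hx y hy hxy
  rcases mem_union.mp hx with hxA | hxB <;> rcases mem_union.mp hy with hyA | hyB
  · exact hA x hxA y hyA hxy
  · exact hAB x hxA y hyB
  · have hswap : ∑ i, (x i - y i) * (x i - y i) = ∑ i, (y i - x i) * (y i - x i) :=
      sum_congr rfl fun i _ => by ring
    exact hswap ▸ hAB y hyA x hxB
  · exact hB x hxB y hyB hxy

end Nonisotropic

section TwoValued

variable {ι R : Type*} [DecidableEq ι]

def twoValuedVec (a b : R) (s : Finset ι) : ι → R := fun i => if i ∈ s then a else b

theorem twoValuedVec_injective {a b : R} (hab : a ≠ b) :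
    Function.Injective (twoValuedVec (ι := ι) a b) := by
  intro s t hst
  ext i
  have hi := congrFun hst i
  by_cases hs : i ∈ s <;> by_cases ht : i ∈ t <;> simp_all [twoValuedVec, eq_comm]

variable [Fintype ι]

def twoValuedFamily [DecidableEq R] (a b : R) (k : ℕ) : Finset (ι → R) :=
  (powersetCard k univ).image (twoValuedVec a b)

theorem mem_twoValuedFamily [DecidableEq R] {a b : R} {k : ℕ} {x : ι → R} :
    x ∈ twoValuedFamily a b k ↔ ∃ s : Finset ι, #s = k ∧ twoValuedVec a b s = x := by
  simp [twoValuedFamily]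

theorem card_twoValuedFamily [DecidableEq R] {a b : R} (hab : a ≠ b) (k : ℕ) :
    #(twoValuedFamily (ι := ι) a b k) = (Fintype.card ι).choose k := by
  rw [twoValuedFamily, card_image_of_injective _ (twoValuedVec_injective hab), card_powersetCard,
    card_univ]

variable [CommRing R]

theorem sum_twoValuedVec_one_zero (s : Finset ι) : ∑ i, twoValuedVec (1 : R) 0 s i = #s := by
  simp [twoValuedVec]

theorem sum_twoValuedVec_sub_mul_self (a b a' b' : R) (s t : Finset ι) :
    ∑ i, (twoValuedVec a b s i - twoValuedVec a' b' t i) *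
        (twoValuedVec a b s i - twoValuedVec a' b' t i) =
      Fintype.card ι * (b - b') ^ 2 + (a - b) * (a + b - 2 * b') * #s
        + (a' - b') * (a' + b' - 2 * b) * #t - 2 * (a - b) * (a' - b') * #(s ∩ t) := by
  have pointwise (i : ι) :
      (twoValuedVec a b s i - twoValuedVec a' b' t i) *
          (twoValuedVec a b s i - twoValuedVec a' b' t i) =
        (b - b') ^ 2 + (a - b) * (a + b - 2 * b') * twoValuedVec 1 0 s i
          + (a' - b') * (a' + b' - 2 * b) * twoValuedVec 1 0 t i
          - 2 * (a - b) * (a' - b') * twoValuedVec 1 0 (s ∩ t) i := by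
    by_cases hs : i ∈ s <;> by_cases ht : i ∈ t <;> simp [twoValuedVec, hs, ht] <;> ring
  rw [sum_congr rfl fun i _ => pointwise i]
  simp only [sum_add_distrib, sum_sub_distrib, ← mul_sum, sum_twoValuedVec_one_zero, sum_const,
    card_univ, nsmul_eq_mul]

end TwoValued

section CharP

variable {ι R : Type*} [Fintype ι] [DecidableEq ι] [Field R] [DecidableEq R]
variable {p : ℕ} [CharP R p]

theorem hasNonisotropicDifferences_twoValuedFamily (hp : 2 < p) {a b : R} (hab : a ≠ b) {k : ℕ}
    (hk : k < p) : HasNonisotropicDifferences (twoValuedFamily (ι := ι) a b k) := by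
  rintro _ hx _ hy hxy
  obtain ⟨s, hs, rfl⟩ := mem_twoValuedFamily.mp hx
  obtain ⟨t, ht, rfl⟩ := mem_twoValuedFamily.mp hy
  have hlt : #(s ∩ t) < k :=
    hs ▸ card_inter_lt_of_card_eq (fun h => hxy (h ▸ rfl)) (hs.trans ht.symm)
  have hsum : ∑ i, (twoValuedVec a b s i - twoValuedVec a b t i) *
      (twoValuedVec a b s i - twoValuedVec a b t i) =
        2 * (a - b) ^ 2 * ((k - #(s ∩ t) : ℕ) : R) := by
    rw [sum_twoValuedVec_sub_mul_self, hs, ht, Nat.cast_sub hlt.le]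
    ring
  rw [hsum]
  exact mul_ne_zero
    (mul_ne_zero (CharP.two_ne_zero_of_two_lt R hp) (pow_ne_zero 2 (sub_ne_zero.mpr hab)))
    (CharP.natCast_ne_zero_of_pos_of_lt R (by omega) (by omega))

theorem sum_sub_mul_self_ne_zero_of_mem_twoValuedFamily (hp : 2 < p) {a b : R} (hab : a ≠ b)
    (habn : (Fintype.card ι + 2) * b ^ 2 = 2 * a ^ 2 - 2 * a + 1) :
    ∀ x ∈ twoValuedFamily (ι := ι) (1 : R) 0 (p - 1), ∀ y ∈ twoValuedFamily a b (p - 2),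
      ∑ i, (x i - y i) * (x i - y i) ≠ 0 := by
  rintro _ hx _ hy
  obtain ⟨s, hs, rfl⟩ := mem_twoValuedFamily.mp hx
  obtain ⟨t, ht, rfl⟩ := mem_twoValuedFamily.mp hy
  have hle : #(s ∩ t) ≤ p - 2 := ht ▸ card_le_card inter_subset_right
  have hsum : ∑ i, (twoValuedVec (1 : R) 0 s i - twoValuedVec a b t i) *
      (twoValuedVec (1 : R) 0 s i - twoValuedVec a b t i) =
        -(2 * (a - b) * ((#(s ∩ t) + 1 : ℕ) : R)) := by
    have hp1 : ((p - 1 : ℕ) : R) = -1 := by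
      rw [Nat.cast_sub (by omega), CharP.cast_eq_zero]; ring
    have hp2 : ((p - 2 : ℕ) : R) = -2 := by
      rw [Nat.cast_sub (by omega), CharP.cast_eq_zero]; push_cast; ring
    rw [sum_twoValuedVec_sub_mul_self, hs, ht, hp1, hp2]
    push_cast
    linear_combination habn
  rw [hsum, neg_ne_zero]
  exact mul_ne_zero (mul_ne_zero (CharP.two_ne_zero_of_two_lt R hp) (sub_ne_zero.mpr hab))
    (CharP.natCast_ne_zero_of_pos_of_lt R (by omega) (by omega))

end CharP

theorem FiniteField.exists_sq_add_one_eq_mul_sq {F : Type*} [Field F] [Fintype F]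
    (hF : Fintype.card F % 2 = 1) {c : F} (hc : c ≠ 0) : ∃ u b : F, u ^ 2 + 1 = c * b ^ 2 := by
  obtain ⟨u, b, hub⟩ := exists_root_sum_quadratic (f := X ^ 2 + C 1) (g := C (-c) * X ^ 2)
    (by compute_degree!) (by compute_degree!) hF
  simp only [eval_add, eval_pow, eval_X, eval_C, eval_mul] at hub
  exact ⟨u, b, by linear_combination hub⟩

/-- Put `a = (1 + u) / 2`; of the two choices `±b` at least one differs from `a`. -/
theorem exists_ne_and_mul_sq_eq_of_sq_add_one_eq {F : Type*} [Field F] (h2 : (2 : F) ≠ 0)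
    {c u b : F} (h : u ^ 2 + 1 = 2 * c * b ^ 2) :
    ∃ a b : F, a ≠ b ∧ c * b ^ 2 = 2 * a ^ 2 - 2 * a + 1 := by
  have hrel : c * b ^ 2 = 2 * ((1 + u) / 2) ^ 2 - 2 * ((1 + u) / 2) + 1 := by
    field_simp
    linear_combination -h
  by_cases hb : (1 + u) / 2 = b
  · refine ⟨(1 + u) / 2, -b, fun hb' => ?_, by rwa [neg_sq]⟩
    have hb0 : b = 0 := by
      have : 2 * b = 0 := by linear_combination hb.symm.trans hb'
      exact (mul_eq_zero.mp this).resolve_left h2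
    have hu : u = -1 := by
      field_simp at hb
      linear_combination hb + 2 * hb0
    exact h2 (by linear_combination h - (u - 1) * hu + 2 * c * b * hb0)
  · exact ⟨_, b, hb, hrel⟩

theorem ZMod.exists_ne_and_mul_sq_eq {p : ℕ} [Fact p.Prime] (hp : 2 < p) {c : ZMod p}
    (hc : c ≠ 0 ∨ p % 4 = 1) :
    ∃ a b : ZMod p, a ≠ b ∧ c * b ^ 2 = 2 * a ^ 2 - 2 * a + 1 := by
  have h2 : (2 : ZMod p) ≠ 0 := CharP.two_ne_zero_of_two_lt _ hp
  obtain ⟨u, b, hub⟩ : ∃ u b : ZMod p, u ^ 2 + 1 = 2 * c * b ^ 2 := by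
    by_cases hc0 : c = 0
    · have hp4 : p % 4 = 1 := hc.resolve_left (not_not.mpr hc0)
      obtain ⟨u, hu⟩ := (ZMod.exists_sq_eq_neg_one_iff (p := p)).mpr (by omega)
      exact ⟨u, 0, by rw [hc0]; linear_combination -hu⟩
    · refine FiniteField.exists_sq_add_one_eq_mul_sq ?_ (mul_ne_zero h2 hc0)
      rw [ZMod.card]
      exact Nat.odd_iff.mp ((Fact.out : p.Prime).odd_of_ne_two hp.ne')
  exact exists_ne_and_mul_sq_eq_of_sq_add_one_eq h2 hub

/-- if `n ≢ -2 (mod q)` or `q ≡ 1 (mod 4)`, there is a set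
`A ⊆ F_q^n` of size `C(n, q-1) + C(n, q-2)` with no self-orthogonal difference. -/
theorem improved_lower_bound_construction (q n : ℕ) (hq : q.Prime) (hodd : Odd q)
    (h : (n : ZMod q) ≠ -2 ∨ q % 4 = 1) :
    ∃ A : Finset (Fin n → ZMod q),
      A.card = Nat.choose n (q - 1) + Nat.choose n (q - 2) ∧
      ∀ x ∈ A, ∀ y ∈ A, x ≠ y → ∑ i, (x i - y i) * (x i - y i) ≠ 0 := by
  have := Fact.mk hq
  have hq2 : 2 < q := hq.odd_iff.mp hodd
  obtain ⟨a, b, hab, habn⟩ := ZMod.exists_ne_and_mul_sq_eq hq2 (c := (n : ZMod q) + 2)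
    (h.imp (fun hn h0 => hn (eq_neg_of_add_eq_zero_left h0)) id)
  have hcross := sum_sub_mul_self_ne_zero_of_mem_twoValuedFamily (ι := Fin n) hq2 hab
    (by rwa [Fintype.card_fin])
  refine ⟨twoValuedFamily 1 0 (q - 1) ∪ twoValuedFamily a b (q - 2), ?_, ?_⟩
  · rw [card_union_of_disjoint (disjoint_of_sum_sub_mul_self_ne_zero hcross),
      card_twoValuedFamily one_ne_zero, card_twoValuedFamily hab, Fintype.card_fin]
  · exact (hasNonisotropicDifferences_twoValuedFamily hq2 one_ne_zero (by omega)).union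
      (hasNonisotropicDifferences_twoValuedFamily hq2 hab (by omega)) hcross
end

section
/- Let n ≡ 2 (mod 3). Let A ⊆ F_3^n consist of: all vectors with exactly two entries 1 and the rest 0; all vectors with one entry 0 and the rest 2; all vectors with one entry 1 and the rest 2; all vectors with one entry 0 and the rest 1; the all-zero vector; and the all-2 vector. Then |A| = C(n+3, 2) − 1 and no two distinct elements of A have Hamming distance divisible by 3. -/
/-!
Every vector of `A` takes one value `a` off a set `S` and another value `b` on `S`, where
`(a, b, #S)` is one of six shapes. For two such vectors the Hamming distance is an affine
function of `n`, `#S`, `#T` and `#(S ∩ T)`, so modulo 3, with `n ≡ 2` and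
`#(S ∩ T) ≤ min #S #T ≤ 2`, a finite check shows that it vanishes only when the shapes agree and
`S = T`. Applied with `x = y`, the same check shows that the six families are disjoint, so
`#A = C(n, 2) + 3n + 2`.
-/

open Finset

section TwoLevel

variable {ι α : Type*} [Fintype ι] [DecidableEq ι]

def twoLevel (a b : α) (S : Finset ι) : ι → α := fun i => if i ∈ S then b else a

lemma sum_twoLevel {M : Type*} [AddCommGroup M] (f : α → α → M) (a b c d : α)
    (S T : Finset ι) :
    ∑ i, f (twoLevel a b S i) (twoLevel c d T i) =
      Fintype.card ι • f a c + #S • (f b c - f a c) + #T • (f a d - f a c) +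
        #(S ∩ T) • (f b d - f b c - f a d + f a c) := by
  have hcoord : ∀ i, f (twoLevel a b S i) (twoLevel c d T i) =
      f a c + (if i ∈ S then f b c - f a c else 0) + (if i ∈ T then f a d - f a c else 0) +
        (if i ∈ S ∩ T then f b d - f b c - f a d + f a c else 0) := by
    intro i
    by_cases hS : i ∈ S <;> by_cases hT : i ∈ T <;> simp [twoLevel, hS, hT]; abel
  simp only [hcoord, sum_add_distrib, sum_const, card_univ, sum_ite_mem, univ_inter, smul_add]

lemma eq_twoLevel_filter [DecidableEq α] {x : ι → α} {a b : α} (h : ∀ i, x i = a ∨ x i = b) :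
    x = twoLevel a b {i | x i = b} := by
  ext i
  rcases h i with hi | hi <;> by_cases hb : x i = b <;> simp_all [twoLevel]

variable [Fintype α] [DecidableEq α]

def twoLevelVectors (a b : α) (k : ℕ) : Finset (ι → α) :=
  {x | (∀ i, x i = a ∨ x i = b) ∧ #{i | x i = b} = k}

lemma mem_twoLevelVectors_zero {a b : α} (hab : a ≠ b) {x : ι → α} :
    x ∈ twoLevelVectors a b 0 ↔ x = fun _ => a := by
  constructor
  · intro hx
    simp only [twoLevelVectors, mem_filter, mem_univ, true_and, card_eq_zero,
      filter_eq_empty_iff] at hx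
    ext i
    exact (hx.1 i).resolve_right (hx.2 trivial)
  · rintro rfl
    simp [twoLevelVectors, hab]

lemma card_twoLevelVectors {a b : α} (hab : a ≠ b) (k : ℕ) :
    #(twoLevelVectors a b k : Finset (ι → α)) = (Fintype.card ι).choose k := by
  rw [← card_univ, ← card_powersetCard]
  refine card_nbij' (fun x => ({i | x i = b} : Finset ι)) (twoLevel a b) ?_ ?_ ?_ ?_
  · intro x hx
    simp_all [twoLevelVectors]
  · intro S hS
    rw [mem_coe, mem_powersetCard] at hS
    simp only [twoLevelVectors, coe_filter, mem_univ, true_and, Set.mem_ofPred_eq]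
    refine ⟨fun i => ?_, ?_⟩
    · by_cases hi : i ∈ S <;> simp [twoLevel, hi]
    · simpa [twoLevel, hab] using hS.2
  · intro x hx
    simp only [twoLevelVectors, coe_filter, Set.mem_ofPred_eq, mem_univ, true_and] at hx
    exact (eq_twoLevel_filter hx.1).symm
  · intro S _
    ext i
    by_cases hi : i ∈ S <;> simp [twoLevel, hi, hab]

end TwoLevel

lemma eq_of_card_inter_eq {ι : Type*} [DecidableEq ι] {S T : Finset ι}
    (hS : #(S ∩ T) = #S) (hT : #(S ∩ T) = #T) : S = T :=
  (eq_of_subset_of_card_le inter_subset_left hS.ge).symm.trans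
    (eq_of_subset_of_card_le inter_subset_right hT.ge)

def mismatch {α R : Type*} [DecidableEq α] [Zero R] [One R] (u v : α) : R :=
  if u ≠ v then 1 else 0

lemma natCast_hammingDist {ι α R : Type*} [Fintype ι] [DecidableEq α] [AddCommMonoidWithOne R]
    (x y : ι → α) : (hammingDist x y : R) = ∑ i, mismatch (x i) (y i) :=
  (sum_boole _ _).symm

/-- The shape `(a, b, k)` stands for `twoLevelVectors a b k`; these are the six families of the
construction, in the order of the statement. -/
def mod3Shapes : Finset (ZMod 3 × ZMod 3 × ℕ) :=
  {(0, 1, 2), (2, 0, 1), (2, 1, 1), (1, 0, 1), (0, 1, 0), (2, 0, 0)}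

/-- The left-hand side is `sum_twoLevel` for the Hamming distance in `ZMod 3` between vectors of
shapes `p` and `q` on `2 mod 3` coordinates whose value sets meet in `m` coordinates. -/
lemma mod3Shapes_separated : ∀ p ∈ mod3Shapes, ∀ q ∈ mod3Shapes, ∀ m ≤ min p.2.2 q.2.2,
    (2 : ZMod 3) * mismatch p.1 q.1 + p.2.2 * (mismatch p.2.1 q.1 - mismatch p.1 q.1) +
        q.2.2 * (mismatch p.1 q.2.1 - mismatch p.1 q.1) +
        m * (mismatch p.2.1 q.2.1 - mismatch p.2.1 q.1 - mismatch p.1 q.2.1 + mismatch p.1 q.1) =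
      0 →
      p = q ∧ m = p.2.2 := by
  decide

lemma eq_of_three_dvd_hammingDist {ι : Type*} [Fintype ι] [DecidableEq ι]
    (hι : (Fintype.card ι : ZMod 3) = 2)
    {p q : ZMod 3 × ZMod 3 × ℕ} (hp : p ∈ mod3Shapes) (hq : q ∈ mod3Shapes)
    {x y : ι → ZMod 3} (hx : x ∈ twoLevelVectors p.1 p.2.1 p.2.2)
    (hy : y ∈ twoLevelVectors q.1 q.2.1 q.2.2) (hdvd : 3 ∣ hammingDist x y) :
    p = q ∧ x = y := by
  simp only [twoLevelVectors, mem_filter, mem_univ, true_and] at hx hy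
  set S : Finset ι := {i | x i = p.2.1}
  set T : Finset ι := {i | y i = q.2.1}
  have hxS : x = twoLevel p.1 p.2.1 S := eq_twoLevel_filter hx.1
  have hyT : y = twoLevel q.1 q.2.1 T := eq_twoLevel_filter hy.1
  rw [← ZMod.natCast_eq_zero_iff, natCast_hammingDist, hxS, hyT, sum_twoLevel] at hdvd
  simp only [nsmul_eq_mul, hι, hx.2, hy.2] at hdvd
  obtain ⟨rfl, hm⟩ := mod3Shapes_separated p hp q hq #(S ∩ T)
    (le_min (hx.2 ▸ card_le_card inter_subset_left) (hy.2 ▸ card_le_card inter_subset_right))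
    hdvd
  exact ⟨rfl, by rw [hxS, hyT, eq_of_card_inter_eq (hm.trans hx.2.symm) (hm.trans hy.2.symm)]⟩

lemma sum_choose_mod3Shapes (n : ℕ) :
    ∑ p ∈ mod3Shapes, n.choose p.2.2 = (n + 3).choose 2 - 1 := by
  simp +decide [mod3Shapes, Nat.choose_succ_succ]
  omega

/-- for `n ≡ 2 (mod 3)`, the explicit set `A ⊆ F_3^n` has size
`C(n+3,2) - 1` and no two distinct elements at Hamming distance divisible by 3. -/
theorem mod3_construction (n : ℕ) (hn : n % 3 = 2)
    (A : Finset (Fin n → ZMod 3))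
    (hA : A = Finset.univ.filter (fun x : Fin n → ZMod 3 =>
      ((∀ i, x i = 0 ∨ x i = 1) ∧
        (Finset.univ.filter (fun i => x i = 1)).card = 2) ∨
      ((∀ i, x i = 0 ∨ x i = 2) ∧
        (Finset.univ.filter (fun i => x i = 0)).card = 1) ∨
      ((∀ i, x i = 1 ∨ x i = 2) ∧
        (Finset.univ.filter (fun i => x i = 1)).card = 1) ∨
      ((∀ i, x i = 0 ∨ x i = 1) ∧
        (Finset.univ.filter (fun i => x i = 0)).card = 1) ∨
      x = (fun _ => 0) ∨ x = (fun _ => 2))) :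
    A.card = Nat.choose (n + 3) 2 - 1 ∧
    ∀ x ∈ A, ∀ y ∈ A, x ≠ y →
      ¬ (3 ∣ (Finset.univ.filter (fun i => x i ≠ y i)).card) := by
  have hA' : A = mod3Shapes.biUnion fun p => twoLevelVectors p.1 p.2.1 p.2.2 := by
    ext x
    simp only [mod3Shapes, mem_biUnion, mem_insert, mem_singleton, exists_eq_or_imp,
      exists_eq_left, mem_twoLevelVectors_zero zero_ne_one,
      mem_twoLevelVectors_zero (by decide : (2 : ZMod 3) ≠ 0)]
    simp only [hA, twoLevelVectors, mem_filter, mem_univ, true_and, or_comm, or_left_comm,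
      or_assoc]
  have hcard : (Fintype.card (Fin n) : ZMod 3) = 2 := by
    simp [← ZMod.natCast_mod n 3, hn]
  subst hA'
  constructor
  · have hne : ∀ p ∈ mod3Shapes, p.1 ≠ p.2.1 := by decide
    rw [card_biUnion, ← sum_choose_mod3Shapes]
    · refine sum_congr rfl fun p hp => ?_
      rw [card_twoLevelVectors (hne p hp), Fintype.card_fin]
    · intro p hp q hq hpq
      refine disjoint_left.2 fun x hxp hxq => hpq ?_
      exact (eq_of_three_dvd_hammingDist hcard hp hq hxp hxq (by simp)).1
  · intro x hx y hy hxy hdvd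
    obtain ⟨p, hp, hxp⟩ := mem_biUnion.1 hx
    obtain ⟨q, hq, hyq⟩ := mem_biUnion.1 hy
    exact hxy (eq_of_three_dvd_hammingDist hcard hp hq hxp hyq hdvd).2
end

section
/- For n ≡ 2 (mod 3), the maximum size S(n,3) of a set A ⊆ F_3^n such that ⟨x−y, x−y⟩ ≠ 0 for all distinct x, y ∈ A equals C(n+3, 2) − 1. -/
/-!
Upper bound. For `x ≠ z` in `A` the value `v = ⟨x - z, x - z⟩` is a nonzero element of `𝔽₃`,
so `1 - v²` is the indicator of `x = z` on `A`. Since `v = ⟨x̂, ẑ⟩` for `x̂ = (x, ⟨x, x⟩, 1)` and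
`ẑ = (z, 1, ⟨z, z⟩)`, the function `z ↦ 1 - v²` is a combination of the quadratic monomials in
`ẑ`. There are `C(n + 3, 2)` of them and they satisfy the linear relation
`∑ ẑᵢ² = ẑₙ₊₁ ẑₙ₊₂`, so they span a space of dimension less than `C(n + 3, 2)`, which contains
the `|A|` independent indicators.

Lower bound. The code formed by `0`, `2 • 𝟙`, the vectors `𝟙_{i,j}` and the vectors `𝟙 - eᵢ`,
`2 • 𝟙 - 2 • eᵢ`, `2 • 𝟙 - eᵢ` has `C(n, 2) + 3n + 2` elements. Each is of the form
`c • 𝟙 + d • 𝟙_S`, and when `n ≡ 2 (mod 3)` the inner product of two such vectors depends only on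
`c, d, |S|, c', d', |S'|` and `|S ∩ S'|`; this leaves finitely many cases to check.
-/

open Finset Module Submodule

section LinearAlgebra

variable {K V ι m : Type*} [Field K]

theorem Matrix.card_le_rank_of_mul_eq_one [Fintype m] [DecidableEq m] [Fintype ι]
    {G : Matrix m ι K} {H : Matrix ι m K} (h : G * H = 1) : Fintype.card m ≤ H.rank := by
  simpa [h, Matrix.rank_one] using Matrix.rank_mul_le_right G H

theorem finrank_span_range_le_card_sub_one [AddCommGroup V] [Module K V] [Fintype ι]
    [DecidableEq ι] (f : ι → V) {i₀ : ι} (h : f i₀ ∈ span K (f '' {i₀}ᶜ)) :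
    finrank K (span K (Set.range f)) ≤ Fintype.card ι - 1 := by
  have himage : f '' {i₀}ᶜ = Set.range fun i : {i // i ≠ i₀} => f i := by
    ext; simp
  have hle : span K (Set.range f) ≤ span K (Set.range fun i : {i // i ≠ i₀} => f i) := by
    rw [span_le, ← himage]
    rintro _ ⟨i, rfl⟩
    by_cases hi : i = i₀
    · exact hi ▸ h
    · exact subset_span ⟨i, hi, rfl⟩
  have := Module.Finite.span_of_finite K (Set.finite_range fun i : {i // i ≠ i₀} => f i)
  calc finrank K (span K (Set.range f))
      ≤ finrank K (span K (Set.range fun i : {i // i ≠ i₀} => f i)) := Submodule.finrank_mono hle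
    _ ≤ Fintype.card {i // i ≠ i₀} := finrank_range_le_card _
    _ = Fintype.card ι - 1 := by simp [Fintype.card_subtype_compl]

def quadMonomial {R : Type*} [CommSemiring R] (w : ι → R) : Sym2 ι → R :=
  Sym2.lift ⟨fun a b => w a * w b, fun _ _ => mul_comm _ _⟩

theorem finrank_span_quadMonomial_le [Fintype ι] [DecidableEq ι] (Z : m → ι → K)
    (D : Finset ι) {p q : ι} (hpq : p ≠ q) (hZ : ∀ z, ∑ i ∈ D, Z z i * Z z i = Z z p * Z z q) :
    finrank K (span K (Set.range fun s z => quadMonomial (Z z) s)) ≤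
      Fintype.card (Sym2 ι) - 1 := by
  refine finrank_span_range_le_card_sub_one _ (i₀ := s(p, q)) ?_
  have hrelation : (fun z => quadMonomial (Z z) s(p, q)) =
      ∑ i ∈ D, fun z => quadMonomial (Z z) s(i, i) := by
    ext z
    simp [quadMonomial, hZ]
  rw [hrelation]
  refine sum_mem fun i _ => subset_span ⟨s(i, i), ?_, rfl⟩
  simp only [Set.mem_compl_iff, Set.mem_singleton_iff, Sym2.eq_iff]
  rintro (⟨rfl, rfl⟩ | ⟨rfl, rfl⟩) <;> exact hpq rfl

theorem dotProduct_sq_eq_sum {R : Type*} [CommSemiring R] [Fintype ι] (u w : ι → R) :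
    (u ⬝ᵥ w) ^ 2 = ∑ ab : ι × ι, u ab.1 * u ab.2 * (w ab.1 * w ab.2) := by
  rw [sq, dotProduct, sum_mul_sum, ← Finset.sum_product']
  exact Finset.sum_congr rfl fun _ _ => by ring

end LinearAlgebra

variable {ι : Type*} [Fintype ι]

theorem zmod3_sub_dotProduct_sub (x y : ι → ZMod 3) :
    (x - y) ⬝ᵥ (x - y) = x ⬝ᵥ x + y ⬝ᵥ y + x ⬝ᵥ y := by
  have hpt : ∀ a b : ZMod 3, (a - b) * (a - b) = a * a + b * b + a * b := by decide
  simp only [dotProduct, Pi.sub_apply, hpt, sum_add_distrib]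

section UpperBound

def augmentLeft (x : ι → ZMod 3) : ι ⊕ Fin 2 → ZMod 3 := Sum.elim x ![x ⬝ᵥ x, 1]

def augmentRight (z : ι → ZMod 3) : ι ⊕ Fin 2 → ZMod 3 := Sum.elim z ![1, z ⬝ᵥ z]

theorem augmentLeft_dotProduct_augmentRight (x z : ι → ZMod 3) :
    augmentLeft x ⬝ᵥ augmentRight z = (x - z) ⬝ᵥ (x - z) := by
  rw [zmod3_sub_dotProduct_sub]
  simp only [dotProduct, augmentLeft, augmentRight, Fintype.sum_sum_type, Sum.elim_inl,
    Sum.elim_inr, Fin.sum_univ_two, Matrix.cons_val_zero, Matrix.cons_val_one,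
    Matrix.cons_val_fin_one, mul_one, one_mul]
  ring

theorem card_le_of_sub_dotProduct_sub_ne_zero [DecidableEq ι] (A : Finset (ι → ZMod 3))
    (hA : ∀ x ∈ A, ∀ y ∈ A, x ≠ y → (x - y) ⬝ᵥ (x - y) ≠ 0) :
    #A ≤ (Fintype.card ι + 3).choose 2 - 1 := by
  let o : ι ⊕ Fin 2 := Sum.inr 0
  -- `augmentRight z o = 1`, so the constant `1` is the monomial indexed by `(o, o)`
  let G : Matrix A ((ι ⊕ Fin 2) × (ι ⊕ Fin 2)) (ZMod 3) := Matrix.of fun x ab =>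
    (if ab = (o, o) then 1 else 0) - augmentLeft x.1 ab.1 * augmentLeft x.1 ab.2
  let H : Matrix ((ι ⊕ Fin 2) × (ι ⊕ Fin 2)) A (ZMod 3) := Matrix.of fun ab z =>
    quadMonomial (augmentRight z.1) s(ab.1, ab.2)
  have hGH : G * H = 1 := by
    ext x z
    have hentry : (G * H) x z = 1 - ((x.1 - z.1) ⬝ᵥ (x.1 - z.1)) ^ 2 := by
      simp only [Matrix.mul_apply, G, H, Matrix.of_apply, sub_mul, sum_sub_distrib, ite_mul,
        one_mul, zero_mul, sum_ite_eq', ← augmentLeft_dotProduct_augmentRight,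
        dotProduct_sq_eq_sum]
      simp [quadMonomial, o, augmentRight]
    rw [hentry, Matrix.one_apply]
    split_ifs with hxz
    · simp [hxz]
    · rw [ZMod.pow_card_sub_one_eq_one (hA x.1 x.2 z.1 z.2 fun h => hxz (Subtype.ext h))]
      simp
  have hrows : H.rank ≤ finrank (ZMod 3)
      (span (ZMod 3) (Set.range fun s (z : A) => quadMonomial (augmentRight z.1) s)) := by
    rw [Matrix.rank_eq_finrank_span_row]
    have := Module.Finite.span_of_finite (ZMod 3)
      (Set.finite_range fun s (z : A) => quadMonomial (augmentRight z.1) s)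
    refine Submodule.finrank_mono (span_mono ?_)
    rintro _ ⟨ab, rfl⟩
    exact ⟨s(ab.1, ab.2), rfl⟩
  have hquadric : ∀ z : A, ∑ i ∈ univ.map .inl, augmentRight z.1 i * augmentRight z.1 i =
      augmentRight z.1 (Sum.inr 0) * augmentRight z.1 (Sum.inr 1) := by
    simp [augmentRight, dotProduct]
  calc #A = Fintype.card A := (Fintype.card_coe A).symm
    _ ≤ H.rank := Matrix.card_le_rank_of_mul_eq_one hGH
    _ ≤ _ := hrows
    _ ≤ Fintype.card (Sym2 (ι ⊕ Fin 2)) - 1 :=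
      finrank_span_quadMonomial_le _ _ (by simp) hquadric
    _ = _ := by simp [Sym2.card]

end UpperBound

section LowerBound

variable [DecidableEq ι]

def constAddIndicator {R : Type*} [AddZeroClass R] (c d : R) (S : Finset ι) : ι → R :=
  fun t => c + if t ∈ S then d else 0

theorem constAddIndicator_dotProduct {R : Type*} [CommSemiring R] (c d c' d' : R)
    (S S' : Finset ι) :
    constAddIndicator c d S ⬝ᵥ constAddIndicator c' d' S' =
      Fintype.card ι * (c * c') + #S' * (c * d') + #S * (d * c') + #(S ∩ S') * (d * d') := by
  rw [Finset.inter_comm]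
  simp only [dotProduct, constAddIndicator, mul_add, add_mul, ite_mul, zero_mul, mul_ite,
    mul_zero, sum_add_distrib, sum_const, card_univ, nsmul_eq_mul, sum_ite_mem, univ_inter]
  ring

/-- A shape `(c, d, k)` stands for the vectors `c • 𝟙 + d • 𝟙_S` with `#S = k`. -/
def codeShapes : Finset (ZMod 3 × ZMod 3 × ℕ) :=
  {(0, 1, 2), (1, 2, 1), (2, 1, 1), (2, 2, 1), (0, 0, 0), (2, 0, 0)}

def shapePairing (t t' : ZMod 3 × ZMod 3 × ℕ) (m : ℕ) : ZMod 3 :=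
  2 * (t.1 * t'.1) + t'.2.2 * (t.1 * t'.2.1) + t.2.2 * (t.2.1 * t'.1) + m * (t.2.1 * t'.2.1)

theorem shapePairing_ne_zero : ∀ t ∈ codeShapes, ∀ t' ∈ codeShapes, ∀ m ≤ t.2.2, m ≤ t'.2.2 →
    (t = t' → m < t.2.2) →
    shapePairing t t t.2.2 + shapePairing t' t' t'.2.2 + shapePairing t t' m ≠ 0 := by
  decide

def codeIndex : Finset ((_ : ZMod 3 × ZMod 3 × ℕ) × Finset ι) :=
  codeShapes.sigma fun t => powersetCard t.2.2 univ

def codeword (p : (_ : ZMod 3 × ZMod 3 × ℕ) × Finset ι) : ι → ZMod 3 :=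
  constAddIndicator p.1.1 p.1.2.1 p.2

theorem codeword_dotProduct_codeword (hι : Fintype.card ι % 3 = 2)
    (p p' : (_ : ZMod 3 × ZMod 3 × ℕ) × Finset ι) (hp : #p.2 = p.1.2.2)
    (hp' : #p'.2 = p'.1.2.2) :
    codeword p ⬝ᵥ codeword p' = shapePairing p.1 p'.1 #(p.2 ∩ p'.2) := by
  have hcard : (Fintype.card ι : ZMod 3) = 2 := by
    rw [← Nat.mod_add_div (Fintype.card ι) 3, hι]
    simp [show (3 : ZMod 3) = 0 from rfl]
  rw [codeword, codeword, constAddIndicator_dotProduct, hcard, hp, hp', shapePairing]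

theorem codeword_sub_dotProduct_ne_zero (hι : Fintype.card ι % 3 = 2) {p p'}
    (hp : p ∈ codeIndex) (hp' : p' ∈ codeIndex) (hne : p ≠ p') :
    (codeword (ι := ι) p - codeword p') ⬝ᵥ (codeword p - codeword p') ≠ 0 := by
  obtain ⟨t, S⟩ := p
  obtain ⟨t', S'⟩ := p'
  simp only [codeIndex, mem_sigma, mem_powersetCard_univ] at hp hp'
  rw [zmod3_sub_dotProduct_sub, codeword_dotProduct_codeword hι _ _ hp.2 hp.2,
    codeword_dotProduct_codeword hι _ _ hp'.2 hp'.2,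
    codeword_dotProduct_codeword hι _ _ hp.2 hp'.2, inter_self, inter_self, hp.2, hp'.2]
  dsimp only
  have hm : #(S ∩ S') ≤ t.2.2 := hp.2 ▸ card_le_card inter_subset_left
  refine shapePairing_ne_zero t hp.1 t' hp'.1 _ hm (hp'.2 ▸ card_le_card inter_subset_right) ?_
  rintro rfl
  refine hm.lt_of_ne fun h => hne ?_
  have hinter : S ∩ S' = S := eq_of_subset_of_card_le inter_subset_left (by rw [h, hp.2])
  have hSS' : S ⊆ S' := hinter ▸ inter_subset_right
  rw [eq_of_subset_of_card_le hSS' (by rw [hp.2, hp'.2])]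

def extremalCode : Finset (ι → ZMod 3) := codeIndex.image codeword

theorem card_extremalCode (hι : Fintype.card ι % 3 = 2) :
    #(extremalCode (ι := ι)) = (Fintype.card ι).choose 2 + 3 * Fintype.card ι + 2 := by
  rw [extremalCode, card_image_of_injOn, codeIndex, card_sigma]
  · simp +decide only [codeShapes, sum_insert, mem_insert, mem_singleton, sum_singleton,
      card_powersetCard, card_univ, Nat.choose_one_right, Nat.choose_zero_right]
    ring
  · intro p hp p' hp' h
    by_contra hne
    exact codeword_sub_dotProduct_ne_zero hι hp hp' hne (by rw [h, sub_self, zero_dotProduct])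

theorem extremalCode_sub_dotProduct_ne_zero (hι : Fintype.card ι % 3 = 2) :
    ∀ x ∈ extremalCode (ι := ι), ∀ y ∈ extremalCode, x ≠ y → (x - y) ⬝ᵥ (x - y) ≠ 0 := by
  simp only [extremalCode, mem_image]
  rintro _ ⟨p, hp, rfl⟩ _ ⟨p', hp', rfl⟩ hne
  exact codeword_sub_dotProduct_ne_zero hι hp hp' fun h => hne (h ▸ rfl)

end LowerBound

/-- for `n ≡ 2 (mod 3)`, the maximum size of a subset of `F_3^n`
with no self-orthogonal difference between distinct elements is `C(n+3,2) - 1`. -/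
theorem S_n_3_exact (n : ℕ) (hn : n % 3 = 2) :
    IsGreatest {m : ℕ | ∃ A : Finset (Fin n → ZMod 3), A.card = m ∧
        ∀ x ∈ A, ∀ y ∈ A, x ≠ y → ∑ i, (x i - y i) * (x i - y i) ≠ 0}
      (Nat.choose (n + 3) 2 - 1) := by
  have hcard : Fintype.card (Fin n) % 3 = 2 := by rwa [Fintype.card_fin]
  have hchoose : (n + 3).choose 2 - 1 = n.choose 2 + 3 * n + 2 := by
    simp only [Nat.choose_succ_succ, Nat.choose_zero_right, Nat.choose_one_right,
      Nat.succ_eq_add_one, Nat.reduceAdd]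
    omega
  refine ⟨⟨extremalCode, ?_, extremalCode_sub_dotProduct_ne_zero hcard⟩, ?_⟩
  · rw [card_extremalCode hcard, Fintype.card_fin, hchoose]
  · rintro m ⟨A, rfl, hA⟩
    simpa using card_le_of_sub_dotProduct_sub_ne_zero A hA
end

section
/- Let q be an odd prime and let A ⊆ {a,b}^n (a two-letter alphabet) be such that no two distinct elements of A have Hamming distance divisible by q. Then |A| ≤ C(n, q−1) + C(n, q−2) + ⋯ + C(n, 1) + C(n, 0). -/
/-!
Encode `a, b` as `1, -1` in `𝔽_q`, turning codewords into sign vectors `σ x` with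
`∑ i, (σ x i - σ y i) ^ 2 = 4 * d(x, y)`. By Fermat, `x ↦ 1 - (4 * d(x, y)) ^ (q - 1)` is the
indicator of `y` on `A`; since `σ x i ^ 2 = 1`, it is a combination of the multilinear monomials
`∏ i ∈ S, σ x i` with `#S ≤ q - 1`. So these monomials span the `|A|`-dimensional space of all
functions `A → 𝔽_q`.
-/

open Finset Module
open scoped symmDiff

lemma Finset.card_symmDiff_le {ι : Type*} [DecidableEq ι] (S T : Finset ι) :
    #(S ∆ T) ≤ #S + #T := by
  rw [symmDiff_eq_sup_sdiff_inf]
  exact (card_le_card sdiff_subset).trans (card_union_le S T)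

section MultilinearSpan

variable {R X ι : Type*} [CommRing R] (e : X → ι → R)

def multilinearMonomial (S : Finset ι) : X → R := fun x => ∏ i ∈ S, e x i

def multilinearSpan (k : ℕ) : Submodule R (X → R) :=
  Submodule.span R (multilinearMonomial e '' {S | #S ≤ k})

lemma multilinearMonomial_mem_multilinearSpan {k : ℕ} {S : Finset ι} (hS : #S ≤ k) :
    multilinearMonomial e S ∈ multilinearSpan e k :=
  Submodule.subset_span ⟨S, hS, rfl⟩

lemma one_mem_multilinearSpan (k : ℕ) : (1 : X → R) ∈ multilinearSpan e k := by
  have hone : multilinearMonomial e ∅ = (1 : X → R) := funext fun _ => prod_empty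
  exact hone ▸ multilinearMonomial_mem_multilinearSpan e (Nat.zero_le k)

variable {e}

lemma multilinearMonomial_mul [DecidableEq ι] (he : ∀ x i, e x i ^ 2 = 1) (S T : Finset ι) :
    multilinearMonomial e S * multilinearMonomial e T = multilinearMonomial e (S ∆ T) := by
  funext x
  simp only [multilinearMonomial, Pi.mul_apply, symmDiff_eq_sup_sdiff_inf, sup_eq_union,
    inf_eq_inter]
  rw [← prod_union_inter, ← prod_sdiff (inter_subset_union (s := S) (t := T)), mul_assoc,
    ← prod_mul_distrib]
  simp [← sq, he]

lemma multilinearSpan_mul_le (he : ∀ x i, e x i ^ 2 = 1) (k l : ℕ) :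
    multilinearSpan e k * multilinearSpan e l ≤ multilinearSpan e (k + l) := by
  classical
  rw [multilinearSpan, multilinearSpan, Submodule.span_mul_span, Submodule.span_le]
  rintro _ ⟨_, ⟨S, hS, rfl⟩, _, ⟨T, hT, rfl⟩, rfl⟩
  change multilinearMonomial e S * multilinearMonomial e T ∈ _
  rw [multilinearMonomial_mul he]
  exact multilinearMonomial_mem_multilinearSpan e
    ((card_symmDiff_le S T).trans (add_le_add hS hT))

lemma pow_mem_multilinearSpan (he : ∀ x i, e x i ^ 2 = 1) {f : X → R}
    (hf : f ∈ multilinearSpan e 1) (j : ℕ) : f ^ j ∈ multilinearSpan e j := by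
  induction j with
  | zero => simpa using one_mem_multilinearSpan e 0
  | succ j ih =>
    rw [pow_succ]
    exact multilinearSpan_mul_le he j 1 (Submodule.mul_mem_mul ih hf)

lemma sum_sq_sub_mem_multilinearSpan_one [Fintype ι] (he : ∀ x i, e x i ^ 2 = 1) (c : ι → R) :
    (fun x => ∑ i, (e x i - c i) ^ 2) ∈ multilinearSpan e 1 := by
  have hexpand : (fun x => ∑ i, (e x i - c i) ^ 2)
      = ∑ i, ((1 + c i ^ 2) • (1 : X → R) - (2 * c i) • multilinearMonomial e {i}) := by
    funext x
    simp only [Finset.sum_apply, Pi.sub_apply, Pi.smul_apply, Pi.one_apply, smul_eq_mul,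
      multilinearMonomial, prod_singleton]
    exact sum_congr rfl fun i _ => by linear_combination he x i
  rw [hexpand]
  exact Submodule.sum_mem _ fun i _ => Submodule.sub_mem _
    (Submodule.smul_mem _ _ (one_mem_multilinearSpan e 1))
    (Submodule.smul_mem _ _ (multilinearMonomial_mem_multilinearSpan e (card_singleton i).le))

end MultilinearSpan

lemma Submodule.eq_top_of_forall_single_mem {R X : Type*} [CommRing R] [Finite X] [DecidableEq X]
    {W : Submodule R (X → R)} (h : ∀ x, Pi.single x 1 ∈ W) : W = ⊤ := by
  have := Fintype.ofFinite X
  rw [eq_top_iff, ← (Pi.basisFun R X).span_eq, Submodule.span_le]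
  rintro _ ⟨x, rfl⟩
  simpa using h x

section Dimension

variable {K X ι : Type*} [Field K] [Fintype ι] (e : X → ι → K)

lemma finrank_multilinearSpan_le (k : ℕ) :
    finrank K (multilinearSpan e k) ≤ ∑ j ∈ range (k + 1), (Fintype.card ι).choose j := by
  classical
  let 𝒮 := (range (k + 1)).biUnion fun j => powersetCard j (univ : Finset ι)
  have hspan : multilinearSpan e k = Submodule.span K ↑(𝒮.image (multilinearMonomial e)) := by
    rw [multilinearSpan, coe_image]
    congr
    ext S
    simp [𝒮]
    omega
  calc finrank K (multilinearSpan e k) ≤ #(𝒮.image (multilinearMonomial e)) :=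
        hspan ▸ finrank_span_finset_le_card _
    _ ≤ #𝒮 := card_image_le
    _ ≤ ∑ j ∈ range (k + 1), #(powersetCard j (univ : Finset ι)) := card_biUnion_le
    _ = ∑ j ∈ range (k + 1), (Fintype.card ι).choose j := by simp [card_powersetCard]

lemma card_le_sum_choose_of_multilinearSpan_eq_top [Fintype X] {k : ℕ}
    (h : multilinearSpan e k = ⊤) :
    Fintype.card X ≤ ∑ j ∈ range (k + 1), (Fintype.card ι).choose j :=
  calc Fintype.card X = finrank K (X → K) := (finrank_fintype_fun_eq_card K).symm
    _ = finrank K (multilinearSpan e k) := by rw [h, finrank_top]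
    _ ≤ _ := finrank_multilinearSpan_le e k

end Dimension

section SignVector

variable (R : Type*) {ι α : Type*} [CommRing R] [DecidableEq α]

def signVector (a : α) (x : ι → α) : ι → R := fun i => if x i = a then 1 else -1

variable {R} {a b : α} {x y : ι → α}

lemma signVector_sq (i : ι) : signVector R a x i ^ 2 = 1 := by
  unfold signVector
  split_ifs <;> norm_num

lemma sq_sub_signVector {i : ι} (hx : x i = a ∨ x i = b) (hy : y i = a ∨ y i = b) :
    (signVector R a x i - signVector R a y i) ^ 2 = if x i ≠ y i then 4 else 0 := by
  unfold signVector
  by_cases hxa : x i = a <;> by_cases hya : y i = a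
  · simp [hxa, hya]
  · norm_num [hxa, hya, Ne.symm hya]
  · norm_num [hxa, hya]
  · simp [hya, (hx.resolve_left hxa).trans (hy.resolve_left hya).symm]

lemma sum_sq_sub_signVector [Fintype ι] (hx : ∀ i, x i = a ∨ x i = b)
    (hy : ∀ i, y i = a ∨ y i = b) :
    ∑ i, (signVector R a x i - signVector R a y i) ^ 2 = 4 * hammingDist x y := by
  rw [sum_congr rfl fun i _ => sq_sub_signVector (hx i) (hy i), ← sum_filter, sum_const,
    nsmul_eq_mul, mul_comm]
  rfl

end SignVector

lemma ZMod.one_sub_pow_card_sub_one_four_mul {q : ℕ} [Fact q.Prime] (hq2 : q ≠ 2) (d : ℕ) :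
    1 - (4 * (d : ZMod q)) ^ (q - 1) = if q ∣ d then 1 else 0 := by
  have h4 : (4 : ZMod q) ≠ 0 := by
    have h2 : (2 : ZMod q) ≠ 0 := Ring.two_ne_zero (by rwa [ZMod.ringChar_zmod_n])
    simpa [show (4 : ZMod q) = 2 ^ 2 by norm_num] using h2
  rw [ZMod.pow_card_sub_one]
  split_ifs <;> simp_all [ZMod.natCast_eq_zero_iff]

theorem binary_code_upper_bound_general (q n : ℕ) (hq : q.Prime) (hodd : Odd q)
    (α : Type*) [DecidableEq α] (a b : α)
    (A : Finset (Fin n → α))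
    (halph : ∀ x ∈ A, ∀ i, x i = a ∨ x i = b)
    (hd : ∀ x ∈ A, ∀ y ∈ A, x ≠ y →
      ¬ (q ∣ (Finset.univ.filter (fun i => x i ≠ y i)).card)) :
    A.card ≤ ∑ i ∈ Finset.range q, Nat.choose n i := by
  have := Fact.mk hq
  have hq2 : q ≠ 2 := by rintro rfl; exact Nat.not_odd_iff_even.2 even_two hodd
  let e : A → Fin n → ZMod q := fun x => signVector (ZMod q) a x.1
  have he : ∀ x i, e x i ^ 2 = 1 := fun x i => signVector_sq i
  have hsingle : ∀ y : A, Pi.single y 1 = 1 - (fun x => ∑ i, (e x i - e y i) ^ 2) ^ (q - 1) := by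
    intro y
    funext x
    simp only [Pi.sub_apply, Pi.one_apply, Pi.pow_apply, e,
      sum_sq_sub_signVector (halph x x.2) (halph y y.2),
      ZMod.one_sub_pow_card_sub_one_four_mul hq2]
    rcases eq_or_ne x y with rfl | hxy
    · simp
    · simpa [hxy, hammingDist] using hd x x.2 y y.2 (Subtype.coe_ne_coe.2 hxy)
  have htop : multilinearSpan e (q - 1) = ⊤ := Submodule.eq_top_of_forall_single_mem fun y =>
    hsingle y ▸ sub_mem (one_mem_multilinearSpan e _)
      (pow_mem_multilinearSpan he (sum_sq_sub_mem_multilinearSpan_one he _) _)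
  simpa [Nat.sub_add_cancel hq.one_le] using card_le_sum_choose_of_multilinearSpan_eq_top e htop

/-- Delsarte bound, prime case: a binary code of length `n` with
no Hamming distance divisible by the odd prime `q` has size at most
`C(n,q-1) + ⋯ + C(n,1) + C(n,0)`. -/
theorem binary_code_upper_bound (q n : ℕ) (hq : q.Prime) (hodd : Odd q)
    (α : Type*) [DecidableEq α] (a b : α) (hab : a ≠ b)
    (A : Finset (Fin n → α))
    (halph : ∀ x ∈ A, ∀ i, x i = a ∨ x i = b)
    (hd : ∀ x ∈ A, ∀ y ∈ A, x ≠ y →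
      ¬ (q ∣ (Finset.univ.filter (fun i => x i ≠ y i)).card)) :
    A.card ≤ ∑ i ∈ Finset.range q, Nat.choose n i :=
  binary_code_upper_bound_general q n hq hodd α a b A halph hd
end

section
/- Let q be an odd prime and let A ⊆ {a,b}^n be the set of strings in which the number of characters equal to a is even and at most q−1. Then for any two distinct x, y ∈ A, the Hamming distance d(x,y) is not divisible by q; in particular |A| = C(n, q−1) + C(n, q−3) + ⋯ + C(n, 2) + C(n, 0). -/
/-!
Identify a word over `{a, b}` with its set of `a`-positions. The Hamming distance of two words is
then the size of the symmetric difference of their sets, `k + ℓ - 2m`: for two distinct words of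
`A` it is even and lies strictly between `0` and `2q`, so it is not a multiple of the odd number
`q`. Counting `A` amounts to counting the subsets of `Fin n` of even size less than `q`.
-/

open Finset

lemma Finset.card_symmDiff_add_two_mul_card_inter {ι : Type*} [DecidableEq ι] (s t : Finset ι) :
    #(symmDiff s t) + 2 * #(s ∩ t) = #s + #t := by
  have hst := card_sdiff_add_card_inter s t
  have hts := card_sdiff_add_card_inter t s
  rw [symmDiff_def, sup_eq_union, card_union_of_disjoint disjoint_sdiff_sdiff, inter_comm t s]
    at *
  omega

lemma Nat.not_dvd_of_even_of_pos_of_lt_two_mul {q d : ℕ} (hq : Odd q) (hd : Even d)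
    (hd0 : 0 < d) (hdq : d < 2 * q) : ¬ q ∣ d := by
  rintro ⟨c, rfl⟩
  obtain rfl : c = 1 := by
    rcases c with _ | _ | c
    · omega
    · rfl
    · nlinarith
  exact Nat.not_even_iff_odd.mpr hq (by rwa [mul_one] at hd)

lemma Finset.card_filter_card_mem_eq_sum_choose {ι : Type*} [Fintype ι] (K : Finset ℕ) :
    #{S : Finset ι | #S ∈ K} = ∑ k ∈ K, (Fintype.card ι).choose k := by
  rw [card_eq_sum_card_fiberwise (s := {S : Finset ι | #S ∈ K}) (f := card) (t := K)
    fun S hS => (mem_filter.mp hS).2]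
  refine sum_congr rfl fun k hk => ?_
  rw [← card_univ, ← card_powersetCard]
  congr 1
  ext S
  simp only [mem_filter, mem_univ, true_and, mem_powersetCard, subset_univ]
  exact ⟨And.right, fun hS => ⟨hS ▸ hk, hS⟩⟩

section TwoLetterWords

variable {ι α : Type*} [Fintype ι] [DecidableEq α] {a b : α}

lemma card_filter_ne_pos {x y : ι → α} (hxy : x ≠ y) : 0 < #{i | x i ≠ y i} := by
  obtain ⟨i, hi⟩ := Function.ne_iff.mp hxy
  exact card_pos.mpr ⟨i, mem_filter.mpr ⟨mem_univ i, hi⟩⟩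

variable [DecidableEq ι]

lemma filter_ne_eq_symmDiff_filter_eq (hab : a ≠ b) {x y : ι → α}
    (hx : ∀ i, x i = a ∨ x i = b) (hy : ∀ i, y i = a ∨ y i = b) :
    ({i | x i ≠ y i} : Finset ι) =
      symmDiff ({i | x i = a} : Finset ι) ({i | y i = a} : Finset ι) := by
  ext i
  simp only [mem_filter, mem_univ, true_and, mem_symmDiff]
  rcases hx i with h | h <;> rcases hy i with h' | h' <;> simp [h, h', hab, hab.symm]

lemma card_filter_ne_add_two_mul_card_inter (hab : a ≠ b) {x y : ι → α}
    (hx : ∀ i, x i = a ∨ x i = b) (hy : ∀ i, y i = a ∨ y i = b) :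
    #{i | x i ≠ y i} + 2 * #(({i | x i = a} : Finset ι) ∩ ({i | y i = a} : Finset ι)) =
      #{i | x i = a} + #{i | y i = a} := by
  rw [filter_ne_eq_symmDiff_filter_eq hab hx hy, card_symmDiff_add_two_mul_card_inter]

variable [Fintype α]

lemma card_filter_twoValued_eq (hab : a ≠ b) (P : Finset ι → Prop) [DecidablePred P] :
    #{x : ι → α | (∀ i, x i = a ∨ x i = b) ∧ P {i | x i = a}} = #{S : Finset ι | P S} := by
  have filter_ite (S : Finset ι) : ({i | (if i ∈ S then a else b) = a} : Finset ι) = S := by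
    ext i
    by_cases hi : i ∈ S <;> simp [hi, hab.symm]
  refine card_nbij' (fun x => ({i | x i = a} : Finset ι)) (fun S i => if i ∈ S then a else b)
    ?_ ?_ ?_ fun S _ => filter_ite S
  · intro x hx
    simp only [coe_filter, mem_univ, true_and, Set.mem_ofPred_eq] at hx ⊢
    exact hx.2
  · intro S hS
    simp only [coe_filter, mem_univ, true_and, Set.mem_ofPred_eq] at hS ⊢
    refine ⟨fun i => ?_, by rwa [filter_ite]⟩
    by_cases hi : i ∈ S <;> simp [hi]
  · intro x hx
    simp only [coe_filter, mem_univ, true_and, Set.mem_ofPred_eq] at hx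
    funext i
    rcases hx.1 i with h | h <;> simp [h, hab.symm]

end TwoLetterWords

theorem binary_code_lower_bound_construction_general (q n : ℕ)
    (hodd : Odd q)
    (α : Type*) [DecidableEq α] [Fintype α] (a b : α) (hab : a ≠ b)
    (A : Finset (Fin n → α))
    (hA : A = Finset.univ.filter (fun x : Fin n → α =>
      (∀ i, x i = a ∨ x i = b) ∧
      Even (Finset.univ.filter (fun i => x i = a)).card ∧
      (Finset.univ.filter (fun i => x i = a)).card ≤ q - 1)) :
    (∀ x ∈ A, ∀ y ∈ A, x ≠ y →
      ¬ (q ∣ (Finset.univ.filter (fun i => x i ≠ y i)).card)) ∧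
    A.card = ∑ i ∈ (Finset.range q).filter (fun i => Even i), Nat.choose n i := by
  subst hA
  constructor
  · intro x hx y hy hxy
    simp only [mem_filter, mem_univ, true_and] at hx hy
    have hd := card_filter_ne_add_two_mul_card_inter hab hx.1 hy.1
    have heven : Even #{i | x i ≠ y i} := by
      have hsum := hx.2.1.add hy.2.1
      rw [← hd] at hsum
      exact (Nat.even_add.mp hsum).mpr (even_two_mul _)
    have hlt : #{i | x i ≠ y i} < 2 * q := by
      have := hodd.pos
      omega
    exact Nat.not_dvd_of_even_of_pos_of_lt_two_mul hodd heven (card_filter_ne_pos hxy) hlt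
  -- `using 3` absorbs the differing instances deciding `∀ i : Fin n`
  · convert card_filter_twoValued_eq hab fun S : Finset (Fin n) => Even #S ∧ #S ≤ q - 1 using 3
    conv_lhs => rw [← Fintype.card_fin n, ← card_filter_card_mem_eq_sum_choose]
    congr 1
    ext S
    simp only [mem_filter, mem_univ, true_and, mem_range]
    rw [and_comm, Nat.lt_iff_le_pred hodd.pos]

/-- the set of strings in `{a,b}^n` with an even number of `a`'s,
at most `q-1`, has no Hamming distance divisible by `q`, and its size is the
sum of `C(n,i)` over even `i ≤ q-1`. -/
theorem binary_code_lower_bound_construction (q n : ℕ) (hq : q.Prime)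
    (hodd : Odd q)
    (α : Type*) [DecidableEq α] [Fintype α] (a b : α) (hab : a ≠ b)
    (A : Finset (Fin n → α))
    (hA : A = Finset.univ.filter (fun x : Fin n → α =>
      (∀ i, x i = a ∨ x i = b) ∧
      Even (Finset.univ.filter (fun i => x i = a)).card ∧
      (Finset.univ.filter (fun i => x i = a)).card ≤ q - 1)) :
    (∀ x ∈ A, ∀ y ∈ A, x ≠ y →
      ¬ (q ∣ (Finset.univ.filter (fun i => x i ≠ y i)).card)) ∧
    A.card = ∑ i ∈ (Finset.range q).filter (fun i => Even i), Nat.choose n i :=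
  binary_code_lower_bound_construction_general q n hodd α a b hab A hA
end

section
/- Let q be an odd prime and n ≡ −1 (mod q). Let A' ⊆ {a,b}^n consist of all strings where the number of a's is even and at most q−1, together with all strings where the number of b's is odd and at most q−2. Then no two distinct elements of A' have Hamming distance divisible by q, and |A'| = C(n,q−1) + C(n,q−2) + ⋯ + C(n,1) + C(n,0). -/
/-!
Identify a word over `{a, b}` with the set `S` of positions of `a`; the Hamming distance of two
words is then `#(S ∆ T)`, which has the parity of `#S + #T`. Two words of the first family (or,
after complementing, of the second) are at an even distance below `2q`, and the only positive
multiple of `q` there is the odd number `q`. For `S` in the first and `T` in the second family,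
`#(S ∆ T) + #(S ∆ Tᶜ) = n ≡ -1 (mod q)` with `#(S ∆ Tᶜ)` odd and below `2q - 1`,
so `q ∤ #(S ∆ T)`.
Complementing the second family turns `A'` into the disjoint union of the even sets of size `< q`
and the odd sets of size `< q`, whence the count.
-/

open Finset
open scoped symmDiff

lemma Nat.eq_zero_of_dvd_of_even_of_lt_two_mul {q d : ℕ} (hq : Odd q) (hd : Even d)
    (hdvd : q ∣ d) (hlt : d < 2 * q) : d = 0 := by
  obtain ⟨c, rfl⟩ := hdvd
  have hc : c < 2 := Nat.lt_of_mul_lt_mul_left (by rwa [mul_comm 2] at hlt)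
  interval_cases c
  · rfl
  · exact absurd (by simpa using hd) (Nat.not_even_iff_odd.2 hq)

namespace Finset

variable {ι : Type*}

lemma card_filter_card_lt [Fintype ι] (q : ℕ) :
    #{S : Finset ι | #S < q} = ∑ i ∈ range q, (Fintype.card ι).choose i := by
  rw [card_eq_sum_card_fiberwise (f := card) (t := range q)
    fun S hS ↦ mem_range.2 (mem_filter.1 hS).2]
  refine sum_congr rfl fun i hi ↦ ?_
  rw [← card_univ, ← card_powersetCard]
  congr 1
  ext S
  simp only [mem_filter, mem_univ, true_and, mem_powersetCard, subset_univ]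
  constructor
  · exact And.right
  · rintro rfl
    exact ⟨mem_range.1 hi, rfl⟩

variable [DecidableEq ι]

lemma card_symmDiff_add_two_mul_card_inter_s17 (s t : Finset ι) :
    #(s ∆ t) + 2 * #(s ∩ t) = #s + #t := by
  rw [symmDiff_def, sup_eq_union, card_union_of_disjoint disjoint_sdiff_sdiff]
  have hs := card_sdiff_add_card_inter s t
  have ht := card_sdiff_add_card_inter t s
  rw [inter_comm] at ht
  omega

lemma even_card_symmDiff_iff {s t : Finset ι} : Even #(s ∆ t) ↔ Even (#s + #t) := by
  rw [← card_symmDiff_add_two_mul_card_inter_s17]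
  simp [Nat.even_add]

lemma not_dvd_card_symmDiff_of_card_le {q : ℕ} (hq : Odd q) {s t : Finset ι} (hst : s ≠ t)
    (hpar : Even (#s + #t)) (hs : #s ≤ q - 1) (ht : #t ≤ q - 1) :
    ¬ q ∣ #(s ∆ t) := fun hdvd ↦ by
  have hlt : #(s ∆ t) < 2 * q := by
    have := card_symmDiff_add_two_mul_card_inter_s17 s t
    have := hq.pos
    omega
  have h0 := Nat.eq_zero_of_dvd_of_even_of_lt_two_mul hq (even_card_symmDiff_iff.2 hpar) hdvd hlt
  exact hst (symmDiff_eq_bot.1 (card_eq_zero.1 h0))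

variable [Fintype ι]

lemma card_symmDiff_add_card_symmDiff_compl (s t : Finset ι) :
    #(s ∆ t) + #(s ∆ tᶜ) = Fintype.card ι := by
  have : (s ∆ t)ᶜ = s ∆ tᶜ := by
    ext i
    simp only [mem_compl, mem_symmDiff]
    tauto
  rw [← this, card_add_card_compl]

lemma not_dvd_card_symmDiff_of_card_compl_le {q : ℕ} (hq : Odd q)
    (hι : q ∣ Fintype.card ι + 1) {s t : Finset ι} (hs : Even #s) (hs' : #s ≤ q - 1)
    (ht : Odd #tᶜ) (ht' : #tᶜ ≤ q - 2) : ¬ q ∣ #(s ∆ t) := fun hdvd ↦ by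
  have hsum := card_symmDiff_add_card_symmDiff_compl s t
  have hdvd' : q ∣ #(s ∆ tᶜ) + 1 := (Nat.dvd_add_right hdvd).1 (by rwa [← add_assoc, hsum])
  have hpar : Even (#(s ∆ tᶜ) + 1) := by
    rw [Nat.even_add_one, even_card_symmDiff_iff, Nat.not_even_iff_odd]
    exact hs.add_odd ht
  have hlt : #(s ∆ tᶜ) + 1 < 2 * q := by
    have := card_symmDiff_add_two_mul_card_inter_s17 s tᶜ
    have := hq.pos
    omega
  exact absurd (Nat.eq_zero_of_dvd_of_even_of_lt_two_mul hq hpar hdvd' hlt) (Nat.succ_ne_zero _)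

/-- `S` is the set of positions of the letter `a` in a word of `A'`. -/
def IsCodeSet (q : ℕ) (S : Finset ι) : Prop :=
  (Even #S ∧ #S ≤ q - 1) ∨ (Odd #Sᶜ ∧ #Sᶜ ≤ q - 2)

instance (q : ℕ) : DecidablePred (IsCodeSet (ι := ι) q) := fun _ ↦ by
  unfold IsCodeSet
  infer_instance

variable {q : ℕ}

lemma IsCodeSet.not_dvd_card_symmDiff (hq : Odd q) (hι : q ∣ Fintype.card ι + 1)
    {S T : Finset ι} (hS : IsCodeSet q S) (hT : IsCodeSet q T) (hST : S ≠ T) :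
    ¬ q ∣ #(S ∆ T) := by
  rcases hS with ⟨hS, hS'⟩ | ⟨hS, hS'⟩ <;> rcases hT with ⟨hT, hT'⟩ | ⟨hT, hT'⟩
  · exact not_dvd_card_symmDiff_of_card_le hq hST (hS.add hT) hS' hT'
  · exact not_dvd_card_symmDiff_of_card_compl_le hq hι hS hS' hT hT'
  · rw [symmDiff_comm]
    exact not_dvd_card_symmDiff_of_card_compl_le hq hι hT hT' hS hS'
  · rw [← compl_symmDiff_compl]
    exact not_dvd_card_symmDiff_of_card_le hq (compl_injective.ne hST) (hS.add_odd hT)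
      (hS'.trans (Nat.sub_le_sub_left one_le_two q)) (hT'.trans (Nat.sub_le_sub_left one_le_two q))

lemma card_filter_isCodeSet (hq : Odd q) (hι : q ∣ Fintype.card ι + 1) :
    #{S : Finset ι | IsCodeSet q S} = ∑ i ∈ range q, (Fintype.card ι).choose i := by
  have hcodeSet : #{S : Finset ι | IsCodeSet q S} =
      #{S : Finset ι | Even #S ∧ #S ≤ q - 1} +
        #{S : Finset ι | Odd #Sᶜ ∧ #Sᶜ ≤ q - 2} := by
    refine (congrArg card (filter_or ..)).trans (card_union_of_disjoint ?_)
    -- a set in both families would make `n + 1 = #S + #Sᶜ + 1` even, positive and below `2q`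
    refine disjoint_filter.2 fun S _ ⟨hS, hS'⟩ ⟨hSc, hSc'⟩ ↦ ?_
    have hpar : Even (#S + #Sᶜ + 1) := (hS.add_odd hSc).add_one
    rw [card_add_card_compl] at hpar
    have := hq.pos
    have := Nat.eq_zero_of_dvd_of_even_of_lt_two_mul hq hpar hι (by
      rw [← card_add_card_compl S]
      omega)
    omega
  have hcompl : #{S : Finset ι | Odd #Sᶜ ∧ #Sᶜ ≤ q - 2} =
      #{S : Finset ι | Odd #S ∧ #S ≤ q - 2} :=
    card_nbij' compl compl (fun S ↦ by simp) (fun S ↦ by simp) (fun S _ ↦ compl_compl S)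
      (fun S _ ↦ compl_compl S)
  have hsmall : #{S : Finset ι | #S < q} =
      #{S : Finset ι | Even #S ∧ #S ≤ q - 1} + #{S : Finset ι | Odd #S ∧ #S ≤ q - 2} := by
    rw [← card_union_of_disjoint, ← filter_or]
    · congr 1
      refine filter_congr fun S _ ↦ ?_
      simp only [← Nat.not_even_iff_odd]
      obtain ⟨k, rfl⟩ := hq
      by_cases h : Even #S
      · simp only [h, true_and, not_true_eq_false, false_and, or_false]
        omega
      · simp only [h, false_and, not_false_eq_true, true_and, false_or]
        rw [Nat.even_iff] at h
        omega
    · exact disjoint_filter.2 fun S _ h h' ↦ Nat.not_even_iff_odd.2 h'.1 h.1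
  rw [hcodeSet, hcompl, ← hsmall, card_filter_card_lt]

end Finset

section BinaryWord

variable {ι α : Type*} [Fintype ι] [DecidableEq ι] [DecidableEq α] {a b : α}

def binaryWord (a b : α) (S : Finset ι) : ι → α := fun i ↦ if i ∈ S then a else b

lemma filter_binaryWord_eq_left (hab : a ≠ b) (S : Finset ι) :
    ({i | binaryWord a b S i = a} : Finset ι) = S := by
  ext i
  by_cases h : i ∈ S <;> simp [binaryWord, h, hab.symm]

lemma binaryWord_injective (hab : a ≠ b) : Function.Injective (binaryWord (ι := ι) a b) :=
  fun S T h ↦ by rw [← filter_binaryWord_eq_left hab S, h, filter_binaryWord_eq_left hab T]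

lemma filter_binaryWord_ne (hab : a ≠ b) (S T : Finset ι) :
    ({i | binaryWord a b S i ≠ binaryWord a b T i} : Finset ι) = S ∆ T := by
  ext i
  simp only [mem_filter, mem_univ, true_and, mem_symmDiff]
  by_cases hS : i ∈ S <;> by_cases hT : i ∈ T <;> simp [binaryWord, hS, hT, hab, hab.symm]

lemma filter_eq_right_eq_compl (hab : a ≠ b) {x : ι → α} (hx : ∀ i, x i = a ∨ x i = b) :
    ({i | x i = b} : Finset ι) = ({i | x i = a} : Finset ι)ᶜ := by
  ext i
  rcases hx i with h | h <;> simp [h, hab, hab.symm]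

lemma eq_image_binaryWord (hab : a ≠ b) {A : Finset (ι → α)} (P : Finset ι → Prop)
    [DecidablePred P] (hA : ∀ x, x ∈ A ↔ (∀ i, x i = a ∨ x i = b) ∧ P {i | x i = a}) :
    A = ({S | P S} : Finset (Finset ι)).image (binaryWord a b) := by
  ext x
  simp only [hA, mem_image, mem_filter, mem_univ, true_and]
  constructor
  · rintro ⟨hx, hP⟩
    refine ⟨_, hP, funext fun i ↦ ?_⟩
    rcases hx i with h | h <;> simp [binaryWord, h, hab.symm]
  · rintro ⟨S, hS, rfl⟩
    refine ⟨fun i ↦ ?_, by rwa [filter_binaryWord_eq_left hab]⟩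
    unfold binaryWord
    split_ifs <;> simp

end BinaryWord

theorem binary_code_lower_bound_special_general (q n : ℕ) (hodd : Odd q)
    (hn : n % q = q - 1)
    (α : Type*) [DecidableEq α] [Fintype α] (a b : α) (hab : a ≠ b)
    (A : Finset (Fin n → α))
    (hA : A = Finset.univ.filter (fun x : Fin n → α =>
      (∀ i, x i = a ∨ x i = b) ∧
      ((Even (Finset.univ.filter (fun i => x i = a)).card ∧
          (Finset.univ.filter (fun i => x i = a)).card ≤ q - 1) ∨
        (Odd (Finset.univ.filter (fun i => x i = b)).card ∧
          (Finset.univ.filter (fun i => x i = b)).card ≤ q - 2)))) :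
    (∀ x ∈ A, ∀ y ∈ A, x ≠ y →
      ¬ (q ∣ (Finset.univ.filter (fun i => x i ≠ y i)).card)) ∧
    A.card = ∑ i ∈ Finset.range q, Nat.choose n i := by
  have hdvd : q ∣ Fintype.card (Fin n) + 1 := by
    have := Nat.div_add_mod n q
    have := hodd.pos
    exact ⟨n / q + 1, by rw [Fintype.card_fin, mul_add, mul_one]; omega⟩
  have hA' : A = ({S | IsCodeSet q S} : Finset (Finset (Fin n))).image (binaryWord a b) := by
    refine eq_image_binaryWord hab _ fun x ↦ ?_
    simp only [hA, mem_filter, mem_univ, true_and]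
    exact and_congr_right fun hx ↦ by rw [filter_eq_right_eq_compl hab hx]; rfl
  subst hA'
  refine ⟨?_, ?_⟩
  · simp only [mem_image, mem_filter, mem_univ, true_and]
    rintro _ ⟨S, hS, rfl⟩ _ ⟨T, hT, rfl⟩ hST
    rw [filter_binaryWord_ne hab]
    exact hS.not_dvd_card_symmDiff hodd hdvd hT (ne_of_apply_ne _ hST)
  · rw [card_image_of_injective _ (binaryWord_injective hab), card_filter_isCodeSet hodd hdvd,
      Fintype.card_fin]

/-- for `n ≡ -1 (mod q)`, the enlarged code (even number of `a`'s
at most `q-1`, together with odd number of `b`'s at most `q-2`) has no Hamming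
distance divisible by `q` and size `C(n,q-1)+⋯+C(n,0)`. -/
theorem binary_code_lower_bound_special (q n : ℕ) (hq : q.Prime) (hodd : Odd q)
    (hn : n % q = q - 1)
    (α : Type*) [DecidableEq α] [Fintype α] (a b : α) (hab : a ≠ b)
    (A : Finset (Fin n → α))
    (hA : A = Finset.univ.filter (fun x : Fin n → α =>
      (∀ i, x i = a ∨ x i = b) ∧
      ((Even (Finset.univ.filter (fun i => x i = a)).card ∧
          (Finset.univ.filter (fun i => x i = a)).card ≤ q - 1) ∨
        (Odd (Finset.univ.filter (fun i => x i = b)).card ∧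
          (Finset.univ.filter (fun i => x i = b)).card ≤ q - 2)))) :
    (∀ x ∈ A, ∀ y ∈ A, x ≠ y →
      ¬ (q ∣ (Finset.univ.filter (fun i => x i ≠ y i)).card)) ∧
    A.card = ∑ i ∈ Finset.range q, Nat.choose n i :=
  binary_code_lower_bound_special_general q n hodd hn α a b hab A hA
end
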